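/- arXiv:1404.7446 — 8 statements merged into one kernel-verified Lean document; each statement's English description precedes it below -/
import Mathlib

section
/- Let n ≥ 1, let C be an n×n matrix with integer entries, and let C' denote the matrix obtained from C by deleting its first row and first column (with the convention that the determinant of the empty 0×0 matrix is 1). For an integer a, let A be the (n+2)×(n+2) integer matrix whose upper-left 2×2 block is the diagonal matrix diag(a, a), whose entries A(1,3) = A(2,3) = A(3,1) = A(3,2) = 1, whose other entries in the first two rows and first two columns are 0, and whose lower-right n×n block is C. Then det A = a²·det C − 2a·det C'. -/
lemma colexp (m : ℕ) (M : Matrix (Fin (m+1)) (Fin (m+1)) ℤ)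
    (h : ∀ i, M i 0 = if i = 0 then 1 else 0) :
    M.det = (M.submatrix Fin.succ Fin.succ).det := by
  rw [Matrix.det_succ_column_zero]
  simp [Fin.sum_univ_succ, h, Fin.succ_ne_zero]


/-- Lemma 5.6 (2): bordering an `n × n` integer matrix `C` (here of size `n+1`, so `n ≥ 1`) by
two new indices, with upper-left `2 × 2` block `diag(a, a)`, a `1` linking each new index to the
first index of `C` and zeros elsewhere, satisfies `det A = a²·det C − 2a·det C'`, where `C'` is
obtained from `C` by deleting its first row and column. -/
theorem stmt_1 (n : ℕ) (C : Matrix (Fin (n + 1)) (Fin (n + 1)) ℤ) (a : ℤ)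
    (A : Matrix (Fin (n + 3)) (Fin (n + 3)) ℤ)
    (h00 : A 0 0 = a) (h11 : A 1 1 = a) (h01 : A 0 1 = 0) (h10 : A 1 0 = 0)
    (hrow0 : ∀ j : Fin (n + 1), A 0 j.succ.succ = if j = 0 then 1 else 0)
    (hrow1 : ∀ j : Fin (n + 1), A 1 j.succ.succ = if j = 0 then 1 else 0)
    (hcol0 : ∀ i : Fin (n + 1), A i.succ.succ 0 = if i = 0 then 1 else 0)
    (hcol1 : ∀ i : Fin (n + 1), A i.succ.succ 1 = if i = 0 then 1 else 0)
    (hblock : ∀ i j : Fin (n + 1), A i.succ.succ j.succ.succ = C i j) :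
    A.det = a ^ 2 * C.det - 2 * a * (C.submatrix Fin.succ Fin.succ).det := by
  rw [Matrix.det_succ_row_zero]
  simp only [Fin.sum_univ_succ, h00, h01, hrow0, Fin.succ_ne_zero, if_pos, if_neg, if_false,
    Fin.val_zero, Fin.val_one, Fin.val_succ, pow_zero, pow_succ, one_mul, mul_one, neg_mul,
    neg_neg, mul_zero, zero_mul, neg_zero, Finset.sum_const_zero, add_zero, zero_add, if_true,
    ite_false, Fin.succ_zero_eq_one, h01]
  have hB0 : (A.submatrix Fin.succ (Fin.succAbove 0)).det
      = a * C.det - (C.submatrix Fin.succ Fin.succ).det := by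
    rw [Matrix.det_succ_row_zero]
    simp only [Fin.sum_univ_succ, Matrix.submatrix_apply, Matrix.submatrix_submatrix,
      Fin.succAbove_zero, Fin.succ_zero_eq_one, h11, hrow1, Fin.succ_ne_zero, if_pos, if_neg,
      if_false, ite_false, ite_true, eq_self_iff_true, Fin.val_zero, Fin.val_one, Fin.val_succ,
      pow_zero, pow_succ, one_mul, mul_one, neg_mul, neg_neg, mul_zero, zero_mul, neg_zero,
      Finset.sum_const_zero, add_zero, zero_add]
    have hc : ∀ i, (A.submatrix (Fin.succ ∘ Fin.succ) (Fin.succ ∘ Fin.succAbove 1)) i 0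
        = if i = 0 then 1 else 0 := by
      intro i
      simp [Fin.one_succAbove_zero, Fin.succ_zero_eq_one, hcol1]
    have e1 : A.submatrix (Fin.succ ∘ Fin.succ) (Fin.succ ∘ Fin.succ) = C := by
      ext i j; simp [hblock]
    have e2 : ((A.submatrix (Fin.succ ∘ Fin.succ) (Fin.succ ∘ Fin.succAbove 1)).submatrix
        Fin.succ Fin.succ) = C.submatrix Fin.succ Fin.succ := by
      ext i j; simp [Fin.one_succAbove_succ, hblock]
    rw [colexp _ _ hc, e1, e2]
    ring
  have hB2 : (A.submatrix Fin.succ (Fin.succ 1).succAbove).det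
      = -(a * (C.submatrix Fin.succ Fin.succ).det) := by
    rw [Matrix.det_succ_row_zero]
    simp only [Fin.sum_univ_succ, Matrix.submatrix_apply, Matrix.submatrix_submatrix,
      Fin.succ_succAbove_zero, Fin.succ_succAbove_succ, Fin.one_succAbove_zero,
      Fin.one_succAbove_succ, Fin.succ_zero_eq_one, h10, h11, hrow1, Fin.succ_ne_zero, if_pos,
      if_neg, if_false, ite_false, ite_true, eq_self_iff_true, Fin.val_zero, Fin.val_one,
      Fin.val_succ, pow_zero, pow_succ, one_mul, mul_one, neg_mul, neg_neg, mul_zero, zero_mul,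
      neg_zero, Finset.sum_const_zero, add_zero, zero_add]
    have hc : ∀ i, (A.submatrix (Fin.succ ∘ Fin.succ)
        ((Fin.succ 1).succAbove ∘ Fin.succAbove 1)) i 0 = if i = 0 then 1 else 0 := by
      intro i
      simp [Fin.one_succAbove_zero, show ((2:Fin (n+3)).succAbove 0 : Fin (n+3)) = 0 from rfl, hcol0]
    have e2 : ((A.submatrix (Fin.succ ∘ Fin.succ)
        ((Fin.succ 1).succAbove ∘ Fin.succAbove 1)).submatrix Fin.succ Fin.succ)
        = C.submatrix Fin.succ Fin.succ := by
      have hstep : ∀ j : Fin n, (2 : Fin (n+3)).succAbove j.succ.succ = j.succ.succ.succ := by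
        intro j
        rw [← Fin.succ_one_eq_two, Fin.succ_succAbove_succ, Fin.one_succAbove_succ]
      ext i j; simp [Fin.one_succAbove_succ, hstep, hblock]
    rw [colexp _ _ hc, e2]
  rw [hB0, hB2]
  ring
end

section
/- Let p be a prime, let j ≥ 1, and let θ be an integer coprime to p, of parity opposite to that of p (i.e. θ + p is odd), with 0 < |θ| < p^j. Then there exist an integer n ≥ 1 and even integers a₁, …, aₙ such that the n×n symmetric tridiagonal integer matrix T whose diagonal entries are a₁, …, aₙ, whose entries on the first super- and sub-diagonal are all equal to 1, and whose other entries are 0, satisfies |det T| = p^j and, over the rationals, the (1,1)-entry of T⁻¹ equals θ/p^j. -/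
/-!
Run the Euclidean algorithm with even quotients: write `q = a₁ θ - r` with `a₁` even and
`0 < |r| < |θ|`. Since `θ + q` is odd, `r + θ` is odd again, so one can recurse on `(r, θ)`
until `θ = ±1`, where `q` is even. This is the continued fraction
`q / θ = a₁ - 1 / (a₂ - 1 / (⋯ - 1 / aₙ))`, and expanding `det T` along the first row gives the
continuant recurrence, so `det T = ±q` and the minor at `(1, 1)` is `±θ` with the same sign;
by Cramer's rule that minor over `det T` is `(T⁻¹)₁₁`.
-/

open Matrix

def pathMatrix {R : Type*} [Zero R] [One R] {n : ℕ} (a : Fin n → R) : Matrix (Fin n) (Fin n) R :=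
  of fun i k => if i = k then a i else if (i : ℕ) + 1 = k ∨ (k : ℕ) + 1 = i then 1 else 0

namespace pathMatrix

variable {R : Type*}

lemma submatrix_succ [Zero R] [One R] {n : ℕ} (a : Fin (n + 1) → R) :
    (pathMatrix a).submatrix Fin.succ Fin.succ = pathMatrix (Fin.tail a) := by
  ext i k
  simp only [pathMatrix, submatrix_apply, of_apply, Fin.val_succ, Fin.succ_inj, Fin.tail,
    Nat.add_right_cancel_iff]

lemma det_succ_succ [CommRing R] {n : ℕ} (a : Fin (n + 2) → R) :
    (pathMatrix a).det =
      a 0 * (pathMatrix (Fin.tail a)).det - (pathMatrix (Fin.tail (Fin.tail a))).det := by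
  have h00 : pathMatrix a 0 0 = a 0 := by simp [pathMatrix]
  have h01 : pathMatrix a 0 1 = 1 := by simp [pathMatrix, Fin.ext_iff]
  have h0 : ∀ k : Fin n, pathMatrix a 0 k.succ.succ = 0 := fun k => by
    simp [pathMatrix, Fin.ext_iff]
  have hminor : ((pathMatrix a).submatrix Fin.succ (Fin.succAbove 1)).det =
      (pathMatrix (Fin.tail (Fin.tail a))).det := by
    have h10 : pathMatrix a 1 0 = 1 := by simp [pathMatrix, Fin.ext_iff]
    have hcol : ∀ i : Fin n, pathMatrix a i.succ.succ 0 = 0 := fun i => by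
      simp [pathMatrix, Fin.ext_iff]
    have hsub : ((pathMatrix a).submatrix Fin.succ (Fin.succAbove 1)).submatrix
        Fin.succ Fin.succ = pathMatrix (Fin.tail (Fin.tail a)) := by
      rw [← submatrix_succ, ← submatrix_succ, submatrix_submatrix, submatrix_submatrix]
      rfl
    rw [det_succ_column_zero, Fin.sum_univ_succ]
    simp [h10, hcol, hsub]
  rw [det_succ_row_zero, Fin.sum_univ_succ, Fin.sum_univ_succ]
  simp only [Fin.succAbove_zero, Fin.succ_zero_eq_one, submatrix_succ, hminor, h00, h01, h0,
    Fin.val_zero, Fin.val_one, pow_zero, pow_one, one_mul, mul_one, neg_mul, mul_zero, zero_mul,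
    Finset.sum_const_zero, add_zero]
  ring

end pathMatrix

lemma Matrix.inv_apply_zero_zero {K : Type*} [Field K] {n : ℕ}
    (A : Matrix (Fin (n + 1)) (Fin (n + 1)) K) :
    A⁻¹ 0 0 = (A.submatrix Fin.succ Fin.succ).det / A.det := by
  rw [inv_def, smul_apply, adjugate_fin_succ_eq_det_submatrix, Ring.inverse_eq_inv', smul_eq_mul]
  simp [div_eq_inv_mul]

lemma Int.exists_even_abs_mul_sub_lt {θ q : ℤ} (hθ : θ ≠ 0) (hdvd : ¬ θ ∣ q) :
    ∃ a : ℤ, Even a ∧ 0 < |a * θ - q| ∧ |a * θ - q| < |θ| := by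
  have hs0 : 0 < q % θ :=
    (Int.emod_nonneg q hθ).lt_of_ne (Ne.symm (mt Int.dvd_of_emod_eq_zero hdvd))
  have hslt : q % θ < |θ| := Int.emod_lt_abs q hθ
  have hq : θ * (q / θ) + q % θ = q := Int.mul_ediv_add_emod q θ
  by_cases hk : Even (q / θ)
  · refine ⟨q / θ, hk, ?_⟩
    rw [show q / θ * θ - q = -(q % θ) by linear_combination hq, abs_neg, abs_of_pos hs0]
    exact ⟨hs0, hslt⟩
  · refine ⟨q / θ + θ.sign, (Int.not_even_iff_odd.mp hk).add_odd (Int.odd_sign_iff.mpr hθ), ?_⟩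
    rw [show (q / θ + θ.sign) * θ - q = |θ| - q % θ by
      linear_combination hq + Int.sign_mul_self_eq_abs θ, abs_of_pos (by linarith)]
    constructor <;> linarith

lemma exists_even_pathMatrix_det (θ q : ℤ) (hθ : θ ≠ 0) (hcop : IsCoprime θ q)
    (hodd : Odd (θ + q)) :
    ∃ (n : ℕ) (a : Fin (n + 1) → ℤ) (ε : ℤˣ), (∀ i, Even (a i)) ∧
      (pathMatrix a).det = ε * q ∧ (pathMatrix (Fin.tail a)).det = ε * θ := by
  induction hm : θ.natAbs using Nat.strong_induction_on generalizing θ q with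
  | _ m ih =>
    by_cases hunit : IsUnit θ
    · have hq : Even q := by
        rcases Int.isUnit_iff.mp hunit with rfl | rfl <;> simpa [Int.odd_add'] using hodd
      refine ⟨0, fun _ => q * θ, hunit.unit, fun _ => hq.mul_right θ, ?_, ?_⟩
      · simp [pathMatrix, mul_comm]
      · simp [Int.isUnit_mul_self hunit]
    · obtain ⟨a₁, ha₁, hr0, hrθ⟩ :=
        Int.exists_even_abs_mul_sub_lt hθ fun h => hunit (hcop.isUnit_of_dvd' dvd_rfl h)
      have hlt : (a₁ * θ - q).natAbs < m := by zify; rw [← hm]; simpa using hrθ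
      have hcop' : IsCoprime (a₁ * θ - q) θ := by
        simpa [sub_eq_neg_add, mul_comm] using hcop.symm.neg_left.add_mul_left_left a₁
      have hodd' : Odd (a₁ * θ - q + θ) := by
        rw [show a₁ * θ - q + θ = a₁ * θ + (θ - q) by ring]
        exact (ha₁.mul_right θ).add_odd (Int.odd_sub.mpr (Int.odd_add.mp hodd))
      obtain ⟨n, b, ε, hb, hdet, hdet'⟩ := ih _ hlt _ θ (abs_pos.mp hr0) hcop' hodd' rfl
      refine ⟨n + 1, Fin.cons a₁ b, ε, Fin.cases ha₁ hb, ?_, ?_⟩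
      · rw [pathMatrix.det_succ_succ]
        simp only [Fin.cons_zero, Fin.tail_cons, hdet, hdet']
        ring
      · rwa [Fin.tail_cons]

theorem stmt_3_general (p : ℕ) (j : ℕ) (hj : 1 ≤ j) (θ : ℤ)
    (hcop : IsCoprime θ (p : ℤ)) (hpar : Odd (θ + (p : ℤ)))
    (hθ0 : 0 < |θ|) :
    ∃ (n : ℕ) (a : Fin (n + 1) → ℤ) (T : Matrix (Fin (n + 1)) (Fin (n + 1)) ℤ),
      (∀ i, Even (a i)) ∧
      (∀ i, T i i = a i) ∧
      (∀ i k : Fin (n + 1), (i : ℕ) + 1 = (k : ℕ) ∨ (k : ℕ) + 1 = (i : ℕ) → T i k = 1) ∧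
      (∀ i k : Fin (n + 1), i ≠ k →
        ¬((i : ℕ) + 1 = (k : ℕ) ∨ (k : ℕ) + 1 = (i : ℕ)) → T i k = 0) ∧
      |T.det| = (p : ℤ) ^ j ∧
      ((T.map (Int.cast : ℤ → ℚ))⁻¹) 0 0 = (θ : ℚ) / (p : ℚ) ^ j := by
  have hpar' : Odd (θ + (p : ℤ) ^ j) := by
    simpa [Int.odd_add, Int.even_pow' (by omega : j ≠ 0)] using hpar
  obtain ⟨n, a, ε, ha, hdet, hdet'⟩ :=
    exists_even_pathMatrix_det θ _ (abs_pos.mp hθ0) hcop.pow_right hpar'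
  refine ⟨n, a, pathMatrix a, ha, fun i => by simp [pathMatrix], fun i k h => ?_,
    fun i k hik h => by simp [pathMatrix, hik, h], ?_, ?_⟩
  · simp [pathMatrix, h, Fin.ext_iff, show (i : ℕ) ≠ k by omega]
  · rw [hdet, abs_mul, Int.isUnit_iff_abs_eq.mp ε.isUnit, one_mul, abs_of_nonneg (by positivity)]
  · rw [Matrix.inv_apply_zero_zero, submatrix_map, ← Int.cast_det, ← Int.cast_det,
      pathMatrix.submatrix_succ, hdet, hdet']
    push_cast
    exact mul_div_mul_left _ _ (by simp)

/-- The matrix-theoretic core of Lemma 5.4: for a prime `p`, `j ≥ 1`, and `θ` coprime to `p`, of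
parity opposite to `p`, with `0 < |θ| < p^j`, there is a symmetric tridiagonal integer matrix `T`
with even diagonal entries, ones on the first super- and sub-diagonals and zeros elsewhere, such
that `|det T| = p^j` and the `(1,1)`-entry of `T⁻¹` (over `ℚ`) is `θ / p^j`. -/
theorem stmt_3 (p : ℕ) (hp : p.Prime) (j : ℕ) (hj : 1 ≤ j) (θ : ℤ)
    (hcop : IsCoprime θ (p : ℤ)) (hpar : Odd (θ + (p : ℤ)))
    (hθ0 : 0 < |θ|) (hθ : |θ| < (p : ℤ) ^ j) :
    ∃ (n : ℕ) (a : Fin (n + 1) → ℤ) (T : Matrix (Fin (n + 1)) (Fin (n + 1)) ℤ),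
      (∀ i, Even (a i)) ∧
      (∀ i, T i i = a i) ∧
      (∀ i k : Fin (n + 1), (i : ℕ) + 1 = (k : ℕ) ∨ (k : ℕ) + 1 = (i : ℕ) → T i k = 1) ∧
      (∀ i k : Fin (n + 1), i ≠ k →
        ¬((i : ℕ) + 1 = (k : ℕ) ∨ (k : ℕ) + 1 = (i : ℕ)) → T i k = 0) ∧
      |T.det| = (p : ℤ) ^ j ∧
      ((T.map (Int.cast : ℤ → ℚ))⁻¹) 0 0 = (θ : ℚ) / (p : ℚ) ^ j :=
  stmt_3_general p j hj θ hcop hpar hθ0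
end

section
/- Fix an integer j ≥ 1 and let A be the 4×4 symmetric integer matrix with rows (2^j, 0, 0, 1), (0, 2^j, 0, 1), (0, 0, −2^j, 1), (1, 1, 1, 0). Then the quotient abelian group G = ℤ⁴ / A·ℤ⁴ (the cokernel of the map x ↦ Ax) is isomorphic to (ℤ/2^j) × (ℤ/2^j) via an isomorphism φ such that for every x ∈ ℤ⁴, if φ([x]) = (y, z) then (1/2)·xᵀA⁻¹x ≡ y·z/2^j (mod ℤ), where A⁻¹ is the inverse of A over ℚ. -/
/-!
The map `x ↦ (x₀ - x₂, x₂ - x₁) mod 2^j` is onto with kernel exactly `A·ℤ⁴`, and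
`(1/2)·xᵀA⁻¹x = (x₀ - x₂)(x₂ - x₁)/2^j + x₃(x₀ + x₁ - x₂) - 2^(j-1)·x₃²`,
whose last two terms are integers once `j ≥ 1`.
-/

/-- The intersection matrix of the even labelled tree `𝔲_j` of Lemma 5.8. -/
def uMat (j : ℕ) : Matrix (Fin 4) (Fin 4) ℤ :=
  !![2 ^ j, 0, 0, 1;
     0, 2 ^ j, 0, 1;
     0, 0, -2 ^ j, 1;
     1, 1, 1, 0]

lemma ZMod.exists_mul_div_sub_val_mul_val_div_eq_intCast {n : ℕ} [NeZero n] {a b : ℤ}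
    {y z : ZMod n} (ha : (a : ZMod n) = y) (hb : (b : ZMod n) = z) :
    ∃ m : ℤ, (a * b / n : ℚ) - y.val * z.val / n = m := by
  obtain ⟨s, hs⟩ : (n : ℤ) ∣ a - y.val := by
    rw [← ZMod.intCast_eq_intCast_iff_dvd_sub, ← ha]
    simp
  obtain ⟨t, ht⟩ : (n : ℤ) ∣ b - z.val := by
    rw [← ZMod.intCast_eq_intCast_iff_dvd_sub, ← hb]
    simp
  rw [sub_eq_iff_eq_add'] at hs ht
  subst hs ht
  have hn : (n : ℚ) ≠ 0 := Nat.cast_ne_zero.mpr (NeZero.ne n)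
  refine ⟨y.val * t + z.val * s + n * s * t, ?_⟩
  push_cast
  field_simp
  ring

namespace UMat

open scoped Matrix

lemma mulVec_eq (j : ℕ) (x : Fin 4 → ℤ) :
    (uMat j).mulVec x =
      ![2 ^ j * x 0 + x 3, 2 ^ j * x 1 + x 3, -2 ^ j * x 2 + x 3, x 0 + x 1 + x 2] := by
  ext i
  fin_cases i <;> simp [uMat, Matrix.mulVec, dotProduct, Fin.sum_univ_four]

def cokerMap (j : ℕ) : (Fin 4 → ℤ) →ₗ[ℤ] ZMod (2 ^ j) × ZMod (2 ^ j) where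
  toFun x := (((x 0 - x 2 : ℤ) : ZMod (2 ^ j)), ((x 2 - x 1 : ℤ) : ZMod (2 ^ j)))
  map_add' x y := by
    simp only [Pi.add_apply, Prod.mk_add_mk, Prod.mk.injEq]
    constructor <;> push_cast <;> ring
  map_smul' c x := by
    simp only [Pi.smul_apply, smul_eq_mul, RingHom.id_apply, Prod.smul_mk, zsmul_eq_mul,
      Prod.mk.injEq]
    constructor <;> push_cast <;> ring

lemma cokerMap_apply (j : ℕ) (x : Fin 4 → ℤ) :
    cokerMap j x = (((x 0 - x 2 : ℤ) : ZMod (2 ^ j)), ((x 2 - x 1 : ℤ) : ZMod (2 ^ j))) :=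
  rfl

lemma mem_ker_cokerMap_iff (j : ℕ) (x : Fin 4 → ℤ) :
    x ∈ LinearMap.ker (cokerMap j) ↔ (2 ^ j : ℤ) ∣ x 0 - x 2 ∧ (2 ^ j : ℤ) ∣ x 2 - x 1 := by
  simp only [LinearMap.mem_ker, cokerMap_apply, Prod.mk_eq_zero,
    ZMod.intCast_zmod_eq_zero_iff_dvd, Nat.cast_pow, Nat.cast_ofNat]

lemma ker_cokerMap (j : ℕ) : LinearMap.ker (cokerMap j) = LinearMap.range (uMat j).mulVecLin := by
  ext x
  rw [mem_ker_cokerMap_iff]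
  constructor
  · rintro ⟨⟨a, ha⟩, ⟨b, hb⟩⟩
    -- the preimage `v` has `v 2 = c`, with `c` forced by the last row of `uMat j`
    set c : ℤ := a - b - x 3
    refine ⟨![a - c, -b - c, c, x 2 + 2 ^ j * c], ?_⟩
    rw [Matrix.mulVecLin_apply, mulVec_eq]
    ext i
    fin_cases i <;> simp <;> linarith
  · rintro ⟨v, rfl⟩
    rw [Matrix.mulVecLin_apply, mulVec_eq]
    exact ⟨⟨v 0 + v 2, by simp; ring⟩, ⟨-(v 1 + v 2), by simp; ring⟩⟩

lemma cokerMap_surjective (j : ℕ) : Function.Surjective (cokerMap j) := by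
  rintro ⟨y, z⟩
  refine ⟨![y.cast, -z.cast, 0, 0], ?_⟩
  simp [cokerMap_apply]

noncomputable def cokerEquiv (j : ℕ) :
    ((Fin 4 → ℤ) ⧸ LinearMap.range (uMat j).mulVecLin) ≃+ ZMod (2 ^ j) × ZMod (2 ^ j) :=
  ((Submodule.quotEquivOfEq _ _ (ker_cokerMap j).symm).trans
    (LinearMap.quotKerEquivOfSurjective _ (cokerMap_surjective j))).toAddEquiv

@[simp]
lemma cokerEquiv_mk (j : ℕ) (x : Fin 4 → ℤ) :
    cokerEquiv j (Submodule.Quotient.mk x) = cokerMap j x :=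
  rfl

noncomputable def invMat (j : ℕ) : Matrix (Fin 4) (Fin 4) ℚ :=
  !![0, -(2 ^ j)⁻¹, (2 ^ j)⁻¹, 1;
     -(2 ^ j)⁻¹, 0, (2 ^ j)⁻¹, 1;
     (2 ^ j)⁻¹, (2 ^ j)⁻¹, -2 * (2 ^ j)⁻¹, -1;
     1, 1, -1, -2 ^ j]

lemma inv_map_intCast (j : ℕ) : ((uMat j).map (Int.cast : ℤ → ℚ))⁻¹ = invMat j := by
  apply Matrix.inv_eq_right_inv
  ext i k
  fin_cases i <;> fin_cases k <;>
    simp [uMat, invMat, Matrix.mul_apply, Fin.sum_univ_four] <;> field_simp <;> ring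

lemma half_dotProduct_invMat_mulVec (j : ℕ) (x : Fin 4 → ℚ) :
    1 / 2 * x ⬝ᵥ invMat j *ᵥ x =
      (x 0 - x 2) * (x 2 - x 1) / 2 ^ j + x 3 * (x 0 + x 1 - x 2) - 2 ^ j / 2 * x 3 ^ 2 := by
  simp [invMat, dotProduct, Matrix.mulVec, Fin.sum_univ_four]
  field_simp
  ring

end UMat

/-- Lemma 5.8: the cokernel `ℤ⁴/A·ℤ⁴` of `A = uMat j` is isomorphic to
`(ℤ/2^j) × (ℤ/2^j)` by an isomorphism carrying the boundary quadratic linking form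
`x ↦ (1/2)·xᵀA⁻¹x mod ℤ` to the hyperbolic quadratic form `(y,z) ↦ y·z/2^j mod ℤ`. -/
theorem stmt_6 (j : ℕ) (hj : 1 ≤ j) :
    ∃ φ : ((Fin 4 → ℤ) ⧸ LinearMap.range (uMat j).mulVecLin) ≃+
        (ZMod (2 ^ j) × ZMod (2 ^ j)),
      ∀ (x : Fin 4 → ℤ) (y z : ZMod (2 ^ j)),
        φ (Submodule.Quotient.mk x) = (y, z) →
        ∃ m : ℤ,
          (1 / 2 : ℚ) * dotProduct (fun i => (x i : ℚ))
              ((((uMat j).map (Int.cast : ℤ → ℚ))⁻¹).mulVec fun i => (x i : ℚ)) -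
            (y.val : ℚ) * (z.val : ℚ) / 2 ^ j = (m : ℚ) := by
  obtain ⟨k, rfl⟩ : ∃ k, j = k + 1 := ⟨j - 1, by omega⟩
  refine ⟨UMat.cokerEquiv (k + 1), fun x y z hxyz => ?_⟩
  rw [UMat.cokerEquiv_mk, UMat.cokerMap_apply, Prod.mk.injEq] at hxyz
  obtain ⟨m, hm⟩ := ZMod.exists_mul_div_sub_val_mul_val_div_eq_intCast hxyz.1 hxyz.2
  refine ⟨m + x 3 * (x 0 + x 1 - x 2) - 2 ^ k * x 3 ^ 2, ?_⟩
  rw [UMat.inv_map_intCast, UMat.half_dotProduct_invMat_mulVec]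
  push_cast at hm ⊢
  linear_combination hm
end

section
/- Let j ≥ 1, let ε ∈ {1, −1}, let n ≥ 1, and let C be a symmetric n×n integer matrix with det C = 3 whose minor C' (obtained by deleting the first row and column) has det C' = ε·2^j. Let A be the (n+2)×(n+2) symmetric integer matrix whose upper-left 2×2 block is diag(ε·2^j, ε·2^j), whose entries A(1,3) = A(2,3) = A(3,1) = A(3,2) = 1, whose other entries in the first two rows and columns are 0, and whose lower-right n×n block is C. Then det A = 2^{2j}, and over the rationals the inverse matrix satisfies (A⁻¹)(1,1) = (A⁻¹)(2,2) = ε·2^{1−j} and (A⁻¹)(1,2) = ε·2^{−j}. -/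
/-!
If index `0` of `M` is a leaf, joined only to `p.succ`, expanding `det M` along row `0` and then
the remaining cofactor along column `0` gives
`det M = M₀₀ · det (M - {0}) - M₀ₚ Mₚ₀ · det (M - {0, p.succ})`.
Peeling off the two leaves of `A` this way, with `d = ε 2^j`, gives
`det A = d (d det C - det C') - d det C'`, and the cofactors of `A` at the leaves are
`d det C - det C'` (twice) and `det C'`. With `det C = 3` and `det C' = d` this is `det A = d²`,
and Cramer's rule yields the entries `2/d` and `1/d` of `A⁻¹`.
-/

namespace Matrix

variable {R : Type*} [CommRing R]

theorem det_eq_mul_det_submatrix_of_row_zero {m : ℕ} (M : Matrix (Fin (m + 1)) (Fin (m + 1)) R)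
    (hrow : ∀ k : Fin m, M 0 k.succ = 0) :
    M.det = M 0 0 * (M.submatrix Fin.succ Fin.succ).det := by
  simp [det_succ_row_zero, Fin.sum_univ_succ, hrow]

theorem det_eq_of_leaf_zero {m : ℕ} (M : Matrix (Fin (m + 2)) (Fin (m + 2)) R) (p : Fin (m + 1))
    (hrow : ∀ k, k ≠ p → M 0 k.succ = 0) (hcol : ∀ i, i ≠ p → M i.succ 0 = 0) :
    M.det = M 0 0 * (M.submatrix Fin.succ Fin.succ).det -
      M 0 p.succ * M p.succ 0 *
        (M.submatrix (Fin.succ ∘ p.succAbove) (Fin.succ ∘ p.succAbove)).det := by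
  have hminor : (M.submatrix Fin.succ p.succ.succAbove).det =
      (-1) ^ (p : ℕ) * M p.succ 0 *
        (M.submatrix (Fin.succ ∘ p.succAbove) (Fin.succ ∘ p.succAbove)).det := by
    rw [det_succ_column_zero, Fintype.sum_eq_single p fun i hi => by simp [hcol i hi]]
    simp only [submatrix_apply, Fin.succ_succAbove_zero, submatrix_submatrix]
    congr 3
    ext k
    simp
  rw [det_succ_row_zero, Fin.sum_univ_succ,
    Fintype.sum_eq_single p fun k hk => by simp [hrow k hk], hminor]
  have hsign : ((-1 : R) ^ (p : ℕ)) * (-1) ^ (p : ℕ) = 1 := by rw [← mul_pow]; simp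
  simp only [Fin.val_zero, pow_zero, one_mul, Fin.succAbove_zero, Fin.val_succ, pow_succ]
  linear_combination (-(M 0 p.succ * M p.succ 0 *
    (M.submatrix (Fin.succ ∘ p.succAbove) (Fin.succ ∘ p.succAbove)).det)) * hsign

structure IsLeafExtension {n : ℕ} (d : R) (C : Matrix (Fin (n + 1)) (Fin (n + 1)) R)
    (M : Matrix (Fin (n + 2)) (Fin (n + 2)) R) : Prop where
  zero_zero : M 0 0 = d
  zero_succ : ∀ k : Fin (n + 1), M 0 k.succ = if k = 0 then 1 else 0
  succ_zero : ∀ i : Fin (n + 1), M i.succ 0 = if i = 0 then 1 else 0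
  succ_succ : ∀ i k : Fin (n + 1), M i.succ k.succ = C i k

theorem IsLeafExtension.det_eq {n : ℕ} {d : R} {C : Matrix (Fin (n + 1)) (Fin (n + 1)) R}
    {M : Matrix (Fin (n + 2)) (Fin (n + 2)) R} (hM : IsLeafExtension d C M) :
    M.det = d * C.det - (C.submatrix Fin.succ Fin.succ).det := by
  have hC : M.submatrix Fin.succ Fin.succ = C := by ext i k; exact hM.succ_succ i k
  have hC' : M.submatrix (Fin.succ ∘ (0 : Fin (n + 1)).succAbove)
      (Fin.succ ∘ (0 : Fin (n + 1)).succAbove) = C.submatrix Fin.succ Fin.succ := by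
    ext i k; exact hM.succ_succ _ _
  rw [det_eq_of_leaf_zero M 0 (fun k hk => by simp [hM.zero_succ, hk])
    (fun i hi => by simp [hM.succ_zero, hi]), hC, hC', hM.zero_zero, hM.zero_succ, hM.succ_zero]
  simp

structure IsTwoLeafExtension {n : ℕ} (d : R) (C : Matrix (Fin (n + 1)) (Fin (n + 1)) R)
    (A : Matrix (Fin (n + 3)) (Fin (n + 3)) R) : Prop where
  zero_zero : A 0 0 = d
  one_one : A 1 1 = d
  zero_one : A 0 1 = 0
  one_zero : A 1 0 = 0
  zero_succ_succ : ∀ k : Fin (n + 1), A 0 k.succ.succ = if k = 0 then 1 else 0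
  one_succ_succ : ∀ k : Fin (n + 1), A 1 k.succ.succ = if k = 0 then 1 else 0
  succ_succ_zero : ∀ i : Fin (n + 1), A i.succ.succ 0 = if i = 0 then 1 else 0
  succ_succ_one : ∀ i : Fin (n + 1), A i.succ.succ 1 = if i = 0 then 1 else 0
  succ_succ_succ_succ : ∀ i k : Fin (n + 1), A i.succ.succ k.succ.succ = C i k

namespace IsTwoLeafExtension

variable {n : ℕ} {d : R} {C : Matrix (Fin (n + 1)) (Fin (n + 1)) R}
  {A : Matrix (Fin (n + 3)) (Fin (n + 3)) R}

theorem isLeafExtension_submatrix_succ (hA : IsTwoLeafExtension d C A) :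
    IsLeafExtension d C (A.submatrix Fin.succ Fin.succ) where
  zero_zero := by simpa using hA.one_one
  zero_succ k := by simpa using hA.one_succ_succ k
  succ_zero i := by simpa using hA.succ_succ_one i
  succ_succ := hA.succ_succ_succ_succ

theorem isLeafExtension_submatrix_one_succAbove (hA : IsTwoLeafExtension d C A) :
    IsLeafExtension d C (A.submatrix (1 : Fin (n + 3)).succAbove (1 : Fin (n + 3)).succAbove) where
  zero_zero := by simpa [Fin.one_succAbove_zero] using hA.zero_zero
  zero_succ k := by simpa [Fin.one_succAbove_zero] using hA.zero_succ_succ k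
  succ_zero i := by simpa [Fin.one_succAbove_zero] using hA.succ_succ_zero i
  succ_succ := by simpa using hA.succ_succ_succ_succ

theorem isLeafExtension_submatrix_one_succAbove_succ (hA : IsTwoLeafExtension d C A) :
    IsLeafExtension 0 C (A.submatrix (1 : Fin (n + 3)).succAbove Fin.succ) where
  zero_zero := by simpa [Fin.one_succAbove_zero] using hA.zero_one
  zero_succ k := by simpa [Fin.one_succAbove_zero] using hA.zero_succ_succ k
  succ_zero i := by simpa using hA.succ_succ_one i
  succ_succ := by simpa using hA.succ_succ_succ_succ

theorem det_eq (hA : IsTwoLeafExtension d C A) :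
    A.det = d * (d * C.det - (C.submatrix Fin.succ Fin.succ).det)
      - d * (C.submatrix Fin.succ Fin.succ).det := by
  have hrow : ∀ k : Fin (n + 2), k ≠ 1 → A 0 k.succ = 0 := by
    refine Fin.cases (fun _ => by simpa using hA.zero_one) fun k hk => ?_
    rw [hA.zero_succ_succ, if_neg (by rintro rfl; exact hk Fin.succ_zero_eq_one)]
  have hcol : ∀ i : Fin (n + 2), i ≠ 1 → A i.succ 0 = 0 := by
    refine Fin.cases (fun _ => by simpa using hA.one_zero) fun i hi => ?_
    rw [hA.succ_succ_zero, if_neg (by rintro rfl; exact hi Fin.succ_zero_eq_one)]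
  have hC' : A.submatrix (fun x => x.succ.succ.succ) (fun x => x.succ.succ.succ)
      = C.submatrix Fin.succ Fin.succ := by
    ext i k; exact hA.succ_succ_succ_succ _ _
  have hminor : (A.submatrix (Fin.succ ∘ (1 : Fin (n + 2)).succAbove)
      (Fin.succ ∘ (1 : Fin (n + 2)).succAbove)).det = d * (C.submatrix Fin.succ Fin.succ).det := by
    rw [det_eq_mul_det_submatrix_of_row_zero _ fun k => by simpa using hA.one_succ_succ k.succ]
    simp [hA.one_one, Function.comp_def, hC']
  have h02 : A 0 2 = 1 := by simpa using hA.zero_succ_succ 0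
  have h20 : A 2 0 = 1 := by simpa using hA.succ_succ_zero 0
  rw [det_eq_of_leaf_zero A 1 hrow hcol, hminor, hA.isLeafExtension_submatrix_succ.det_eq,
    hA.zero_zero]
  simp [h02, h20]

theorem adjugate_zero_zero (hA : IsTwoLeafExtension d C A) :
    A.adjugate 0 0 = d * C.det - (C.submatrix Fin.succ Fin.succ).det := by
  rw [adjugate_fin_succ_eq_det_submatrix, ← hA.isLeafExtension_submatrix_succ.det_eq]
  simp

theorem adjugate_one_one (hA : IsTwoLeafExtension d C A) :
    A.adjugate 1 1 = d * C.det - (C.submatrix Fin.succ Fin.succ).det := by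
  rw [adjugate_fin_succ_eq_det_submatrix, ← hA.isLeafExtension_submatrix_one_succAbove.det_eq]
  simp

theorem adjugate_zero_one (hA : IsTwoLeafExtension d C A) :
    A.adjugate 0 1 = (C.submatrix Fin.succ Fin.succ).det := by
  rw [adjugate_fin_succ_eq_det_submatrix, Fin.succAbove_zero,
    hA.isLeafExtension_submatrix_one_succAbove_succ.det_eq]
  simp

end IsTwoLeafExtension

theorem inv_map_apply {ι K : Type*} [Fintype ι] [DecidableEq ι] [Field K] (f : R →+* K)
    (A : Matrix ι ι R) (i k : ι) : (A.map f)⁻¹ i k = f (A.adjugate i k) / f A.det := by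
  rw [inv_def, Ring.inverse_eq_inv', ← f.mapMatrix_apply, ← f.map_adjugate, f.map_det]
  simp [div_eq_inv_mul]

end Matrix

theorem stmt_7_general (j : ℕ) (ε : ℤ) (hε : ε = 1 ∨ ε = -1)
    (n : ℕ) (C : Matrix (Fin (n + 1)) (Fin (n + 1)) ℤ)
    (hCdet : C.det = 3)
    (hC'det : (C.submatrix Fin.succ Fin.succ).det = ε * 2 ^ j)
    (A : Matrix (Fin (n + 3)) (Fin (n + 3)) ℤ)
    (h00 : A 0 0 = ε * 2 ^ j) (h11 : A 1 1 = ε * 2 ^ j) (h01 : A 0 1 = 0) (h10 : A 1 0 = 0)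
    (hrow0 : ∀ k : Fin (n + 1), A 0 k.succ.succ = if k = 0 then 1 else 0)
    (hrow1 : ∀ k : Fin (n + 1), A 1 k.succ.succ = if k = 0 then 1 else 0)
    (hcol0 : ∀ i : Fin (n + 1), A i.succ.succ 0 = if i = 0 then 1 else 0)
    (hcol1 : ∀ i : Fin (n + 1), A i.succ.succ 1 = if i = 0 then 1 else 0)
    (hblock : ∀ i k : Fin (n + 1), A i.succ.succ k.succ.succ = C i k) :
    A.det = 2 ^ (2 * j) ∧
    (A.map (Int.cast : ℤ → ℚ))⁻¹ 0 0 = (ε : ℚ) * (2 / 2 ^ j) ∧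
    (A.map (Int.cast : ℤ → ℚ))⁻¹ 1 1 = (ε : ℚ) * (2 / 2 ^ j) ∧
    (A.map (Int.cast : ℤ → ℚ))⁻¹ 0 1 = (ε : ℚ) / 2 ^ j := by
  have hA : Matrix.IsTwoLeafExtension (ε * 2 ^ j) C A :=
    ⟨h00, h11, h01, h10, hrow0, hrow1, hcol0, hcol1, hblock⟩
  have hε2 : ε ^ 2 = 1 := by rcases hε with rfl | rfl <;> norm_num
  have hdet : A.det = 2 ^ (2 * j) := by
    rw [hA.det_eq, hCdet, hC'det, pow_mul']
    linear_combination (2 ^ j) ^ 2 * hε2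
  have hinv : ∀ i k, (A.map (Int.cast : ℤ → ℚ))⁻¹ i k = (A.adjugate i k : ℚ) / 2 ^ (2 * j) := by
    intro i k
    simpa [hdet] using Matrix.inv_map_apply (Int.castRingHom ℚ) A i k
  refine ⟨hdet, ?_, ?_, ?_⟩ <;>
    simp only [hinv, hA.adjugate_zero_zero, hA.adjugate_one_one, hA.adjugate_zero_one, hCdet,
      hC'det] <;>
    push_cast <;> field_simp <;> ring

/-- The computational content of Lemma 5.9: if `C` is symmetric with `det C = 3` and
`det C' = ε·2^j` (where `C'` deletes the first row and column of `C`), and `A` is obtained by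
attaching two new indices with diagonal entries `ε·2^j`, each linked by a `1` to the first index
of `C`, then `det A = 2^{2j}`, and over `ℚ` the inverse satisfies
`(A⁻¹)(1,1) = (A⁻¹)(2,2) = ε·2^{1−j}` and `(A⁻¹)(1,2) = ε·2^{−j}` (indices `0`-based). -/
theorem stmt_7 (j : ℕ) (hj : 1 ≤ j) (ε : ℤ) (hε : ε = 1 ∨ ε = -1)
    (n : ℕ) (C : Matrix (Fin (n + 1)) (Fin (n + 1)) ℤ) (hCsymm : C.IsSymm)
    (hCdet : C.det = 3)
    (hC'det : (C.submatrix Fin.succ Fin.succ).det = ε * 2 ^ j)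
    (A : Matrix (Fin (n + 3)) (Fin (n + 3)) ℤ)
    (h00 : A 0 0 = ε * 2 ^ j) (h11 : A 1 1 = ε * 2 ^ j) (h01 : A 0 1 = 0) (h10 : A 1 0 = 0)
    (hrow0 : ∀ k : Fin (n + 1), A 0 k.succ.succ = if k = 0 then 1 else 0)
    (hrow1 : ∀ k : Fin (n + 1), A 1 k.succ.succ = if k = 0 then 1 else 0)
    (hcol0 : ∀ i : Fin (n + 1), A i.succ.succ 0 = if i = 0 then 1 else 0)
    (hcol1 : ∀ i : Fin (n + 1), A i.succ.succ 1 = if i = 0 then 1 else 0)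
    (hblock : ∀ i k : Fin (n + 1), A i.succ.succ k.succ.succ = C i k) :
    A.det = 2 ^ (2 * j) ∧
    (A.map (Int.cast : ℤ → ℚ))⁻¹ 0 0 = (ε : ℚ) * (2 / 2 ^ j) ∧
    (A.map (Int.cast : ℤ → ℚ))⁻¹ 1 1 = (ε : ℚ) * (2 / 2 ^ j) ∧
    (A.map (Int.cast : ℤ → ℚ))⁻¹ 0 1 = (ε : ℚ) / 2 ^ j :=
  stmt_7_general j ε hε n C hCdet hC'det A h00 h11 h01 h10 hrow0 hrow1 hcol0 hcol1 hblock
end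

section
/- Call an n×n symmetric integer matrix B a tree matrix if all of its off-diagonal entries lie in {0,1} and the simple graph on {1,…,n} in which distinct i and j are adjacent exactly when B(i,j) = 1 is a tree (connected and acyclic); call two symmetric integer matrices of the same size GL(ℤ)-congruent if one equals PᵀAP for some integer matrix P with det P = ±1; and call a symmetric integer matrix treelike if it is GL(ℤ)-congruent to a tree matrix. Then: for every m ≥ 1 and treelike symmetric integer matrices A₁, …, A_m, the block-diagonal sum A₁ ⊕ ⋯ ⊕ A_m ⊕ H is treelike, where H is the 2×2 matrix with rows (0,1) and (1,0). -/
/-!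
Call a vertex `e` of a tree matrix `T` a zero leaf if row `e` of `T` is the unit vector at some
`f ≠ e`: then `e` has weight `0` and `f` is its only neighbour. If `B` is a tree matrix and `r`
any of its vertices, the unimodular change of basis that adds the basis vector `e` to `r` turns
`B ⊕ T` into `B ⊕ T` plus the single edge `r — f` (the new `(r, r)` entry is `T e e = 0`),
which is again a tree matrix with zero leaf `e`. Both vertices of the hyperbolic plane `H` are
zero leaves, so grafting the trees congruent to `A₁, …, A_m` onto `H` one at a time makes
`A₁ ⊕ ⋯ ⊕ A_m ⊕ H` treelike.
-/

open Matrix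

/-- A symmetric integer matrix is a *tree matrix* if its off-diagonal entries lie in `{0,1}`
and the simple graph in which distinct `i`, `j` are adjacent exactly when the `(i,j)` entry is
`1` is a tree. -/
def IsTreeMatrix {n : ℕ} (B : Matrix (Fin n) (Fin n) ℤ) : Prop :=
  B.IsSymm ∧ (∀ i j, i ≠ j → B i j = 0 ∨ B i j = 1) ∧
    (SimpleGraph.fromRel fun i j => B i j = 1).IsTree

/-- Two symmetric integer matrices are `GL(ℤ)`-congruent if one equals `Pᵀ A P` for an integer
matrix `P` with `det P = ±1`. -/
def GLZCongruent {n : ℕ} (A B : Matrix (Fin n) (Fin n) ℤ) : Prop :=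
  ∃ P : Matrix (Fin n) (Fin n) ℤ, (P.det = 1 ∨ P.det = -1) ∧ B = Pᵀ * A * P

/-- A symmetric integer matrix is *treelike* if it is `GL(ℤ)`-congruent to a tree matrix. -/
def IsTreelike {n : ℕ} (A : Matrix (Fin n) (Fin n) ℤ) : Prop :=
  ∃ B : Matrix (Fin n) (Fin n) ℤ, IsTreeMatrix B ∧ GLZCongruent A B

/-- The total size of a finite list of square integer matrices. -/
def totalSize (l : List ((n : ℕ) × Matrix (Fin n) (Fin n) ℤ)) : ℕ :=
  (l.map Sigma.fst).sum

/-- The block-diagonal sum `A₁ ⊕ ⋯ ⊕ A_m` of a list of square integer matrices. -/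
def blockSum : (l : List ((n : ℕ) × Matrix (Fin n) (Fin n) ℤ)) →
    Matrix (Fin (totalSize l)) (Fin (totalSize l)) ℤ
  | [] => 0
  | ⟨_, A⟩ :: t =>
    Matrix.reindex (finCongr (by simp [totalSize])) (finCongr (by simp [totalSize]))
      (Matrix.reindex finSumFinEquiv finSumFinEquiv
        (Matrix.fromBlocks A 0 0 (blockSum t)))

namespace SimpleGraph

variable {V W : Type*} {G : SimpleGraph V} {H : SimpleGraph W}

lemma Walk.support_subset_range_inl {a : V} {x : V ⊕ W} (c : (G ⊕g H).Walk (.inl a) x) :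
    ∀ y ∈ c.support, y ∈ Set.range Sum.inl := by
  classical
  rintro (b | b) hy
  · exact ⟨b, rfl⟩
  · exact absurd (c.takeUntil _ hy).reachable (not_reachable_sum_inl_inr a b)

lemma not_isCycle_sum_inl (hG : G.IsAcyclic) {a : V} (c : (G ⊕g H).Walk (.inl a) (.inl a)) :
    ¬c.IsCycle := by
  intro hc
  have hG' : ((G ⊕g H).induce (Set.range Sum.inl)).IsAcyclic :=
    (Embedding.sumInl.isoInduceRange).isAcyclic_iff.mp hG
  refine hG' (c.induce _ c.support_subset_range_inl) ?_
  rwa [← Walk.isCycle_map_iff_of_injective (f := (Embedding.induce _).toHom)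
    Subtype.val_injective, Walk.map_induce]

theorem IsAcyclic.sum (hG : G.IsAcyclic) (hH : H.IsAcyclic) : (G ⊕g H).IsAcyclic := by
  rintro (a | b) c hc
  · exact not_isCycle_sum_inl hG c hc
  · exact not_isCycle_sum_inl hH _ (hc.map (f := Iso.sumComm.toHom) Iso.sumComm.injective)

theorem IsTree.sum_sup_edge (hG : G.IsTree) (hH : H.IsTree) (v : V) (w : W) :
    ((G ⊕g H) ⊔ edge (Sum.inl v) (Sum.inr w)).IsTree :=
  ⟨hG.connected.sum_sup_edge hH.connected,
    (hG.isAcyclic.sum hH.isAcyclic).sup_edge_of_not_reachable (not_reachable_sum_inl_inr v w)⟩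

end SimpleGraph

namespace Matrix

variable {ι κ : Type*}

/- `IsTreeMatrix` and `GLZCongruent` over an arbitrary index type, so that block sums can be
indexed by `ι ⊕ κ`. -/
def IsTree (B : Matrix ι ι ℤ) : Prop :=
  B.IsSymm ∧ (∀ i j, i ≠ j → B i j = 0 ∨ B i j = 1) ∧
    (SimpleGraph.fromRel fun i j => B i j = 1).IsTree

def GLZCongr [Fintype ι] [DecidableEq ι] (A B : Matrix ι ι ℤ) : Prop :=
  ∃ P : Matrix ι ι ℤ, IsUnit P.det ∧ B = Pᵀ * A * P

section GLZCongr

variable [Fintype ι] [DecidableEq ι] [Fintype κ] [DecidableEq κ]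

theorem GLZCongr.refl (A : Matrix ι ι ℤ) : A.GLZCongr A :=
  ⟨1, by simp, by simp⟩

theorem GLZCongr.trans {A B C : Matrix ι ι ℤ} (hAB : A.GLZCongr B) (hBC : B.GLZCongr C) :
    A.GLZCongr C := by
  obtain ⟨P, hP, rfl⟩ := hAB
  obtain ⟨Q, hQ, rfl⟩ := hBC
  exact ⟨P * Q, by simpa [det_mul] using hP.mul hQ, by simp [transpose_mul, Matrix.mul_assoc]⟩

theorem GLZCongr.fromBlocks {A A' : Matrix ι ι ℤ} {B B' : Matrix κ κ ℤ}
    (hA : A.GLZCongr A') (hB : B.GLZCongr B') :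
    (fromBlocks A 0 0 B).GLZCongr (fromBlocks A' 0 0 B') := by
  obtain ⟨P, hP, rfl⟩ := hA
  obtain ⟨Q, hQ, rfl⟩ := hB
  exact ⟨Matrix.fromBlocks P 0 0 Q, by simpa [det_fromBlocks_zero₂₁] using hP.mul hQ,
    by simp [fromBlocks_transpose, fromBlocks_multiply]⟩

theorem GLZCongr.reindex {A B : Matrix ι ι ℤ} (σ : ι ≃ κ) (h : A.GLZCongr B) :
    (reindex σ σ A).GLZCongr (reindex σ σ B) := by
  obtain ⟨P, hP, rfl⟩ := h
  exact ⟨Matrix.reindex σ σ P, by rwa [det_reindex_self],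
    by simp [reindex_apply, transpose_submatrix, submatrix_mul_equiv]⟩

theorem glzCongruent_iff_glzCongr {n : ℕ} {A B : Matrix (Fin n) (Fin n) ℤ} :
    GLZCongruent A B ↔ A.GLZCongr B := by
  simp only [GLZCongruent, GLZCongr, Int.isUnit_iff]

end GLZCongr

theorem IsTree.reindex {B : Matrix ι ι ℤ} (σ : ι ≃ κ) (hB : B.IsTree) :
    (reindex σ σ B).IsTree := by
  obtain ⟨hsymm, hoff, htree⟩ := hB
  refine ⟨hsymm.submatrix _, fun i j hij => hoff _ _ (σ.symm.injective.ne hij), ?_⟩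
  refine (SimpleGraph.Iso.isTree_iff ⟨σ, ?_⟩).mp htree
  simp

theorem isTree_hyperbolic : (!![0, 1; 1, 0] : Matrix (Fin 2) (Fin 2) ℤ).IsTree := by
  refine ⟨by decide, fun i j _ => by fin_cases i <;> fin_cases j <;> simp,
    ⟨(SimpleGraph.connected_iff_exists_forall_reachable _).mpr ⟨0, fun j => ?_⟩,
      .of_card_le_two (by simp)⟩⟩
  fin_cases j
  · rfl
  · exact SimpleGraph.Adj.reachable (by simp)

section Join

variable [DecidableEq ι] [DecidableEq κ]

theorem fromRel_fromBlocks_single (A : Matrix ι ι ℤ) (T : Matrix κ κ ℤ) (r : ι) (f : κ) :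
    (SimpleGraph.fromRel fun i j => fromBlocks A (single r f 1) (single f r 1) T i j = 1) =
      ((SimpleGraph.fromRel fun i j => A i j = 1) ⊕g
          (SimpleGraph.fromRel fun i j => T i j = 1)) ⊔
        SimpleGraph.edge (Sum.inl r) (Sum.inr f) := by
  ext (a | y) (b | z) <;> simp [SimpleGraph.edge_adj, single_apply] <;> tauto

theorem IsTree.fromBlocks_single {A : Matrix ι ι ℤ} {T : Matrix κ κ ℤ} (hA : A.IsTree)
    (hT : T.IsTree) (r : ι) (f : κ) :
    (fromBlocks A (single r f 1) (single f r 1) T).IsTree := by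
  refine ⟨hA.1.fromBlocks (transpose_single _ _ _) hT.1, ?_, ?_⟩
  · rintro (a | y) (b | z) h
    · exact hA.2.1 a b (by simpa using h)
    · simp only [fromBlocks_apply₁₂, single_apply]; split_ifs <;> simp
    · simp only [fromBlocks_apply₂₁, single_apply]; split_ifs <;> simp
    · exact hT.2.1 y z (by simpa using h)
  · rw [fromRel_fromBlocks_single]
    exact hA.2.2.sum_sup_edge hT.2.2 r f

theorem glzCongr_fromBlocks_single [Fintype ι] [Fintype κ] (A : Matrix ι ι ℤ)
    {T : Matrix κ κ ℤ} (hT : T.IsSymm) {e f : κ} (hef : e ≠ f) (he : T e = Pi.single f 1)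
    (r : ι) : (fromBlocks A 0 0 T).GLZCongr (fromBlocks A (single r f 1) (single f r 1) T) := by
  have hrow : single r e (1 : ℤ) * T = single r f 1 := by
    ext a b
    by_cases h : a = r
    · subst h; simp [he, single_apply, Pi.single_apply, eq_comm]
    · simp [h, Ne.symm h]
  have hcol : T * single e r (1 : ℤ) = single f r 1 := by
    rw [← transpose_transpose (T * _), transpose_mul, transpose_single, hT.eq, hrow,
      transpose_single]
  refine ⟨Matrix.fromBlocks 1 0 (single e r (1 : ℤ)) 1, by simp, ?_⟩
  simp [fromBlocks_transpose, fromBlocks_multiply, transpose_single, hrow, hcol]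
  exact single_mul_single_of_ne _ _ _ _ hef.symm _

end Join

section ZeroLeaf

variable [Fintype ι] [DecidableEq ι] [Fintype κ] [DecidableEq κ]

def IsTreelikeWithZeroLeaf (M : Matrix ι ι ℤ) : Prop :=
  ∃ T : Matrix ι ι ℤ, M.GLZCongr T ∧ T.IsTree ∧ ∃ e f, e ≠ f ∧ T e = Pi.single f 1

theorem IsTreelikeWithZeroLeaf.reindex {M : Matrix ι ι ℤ} (σ : ι ≃ κ)
    (hM : M.IsTreelikeWithZeroLeaf) : (reindex σ σ M).IsTreelikeWithZeroLeaf := by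
  obtain ⟨T, hMT, hT, e, f, hef, he⟩ := hM
  refine ⟨Matrix.reindex σ σ T, hMT.reindex σ, hT.reindex σ, σ e, σ f, σ.injective.ne hef,
    ?_⟩
  ext x
  simp [he, Pi.single_apply, σ.symm_apply_eq]

theorem IsTreelikeWithZeroLeaf.fromBlocks {A B : Matrix ι ι ℤ} (hB : B.IsTree)
    (hAB : A.GLZCongr B) {M : Matrix κ κ ℤ} (hM : M.IsTreelikeWithZeroLeaf) :
    (fromBlocks A 0 0 M).IsTreelikeWithZeroLeaf := by
  obtain ⟨T, hMT, hT, e, f, hef, he⟩ := hM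
  obtain ⟨r⟩ : Nonempty ι := hB.2.2.connected.nonempty
  refine ⟨_, (hAB.fromBlocks hMT).trans (glzCongr_fromBlocks_single B hT.1 hef he r),
    hB.fromBlocks_single hT r f, .inr e, .inr f, by simpa, ?_⟩
  ext (a | y) <;> simp [he, Pi.single_apply, hef.symm]

theorem isTreelikeWithZeroLeaf_fromBlocks_hyperbolic [IsEmpty ι] (Z : Matrix ι ι ℤ) :
    (fromBlocks Z 0 0 !![0, 1; 1, 0]).IsTreelikeWithZeroLeaf := by
  have hZ : fromBlocks Z 0 0 !![0, 1; 1, 0] =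
      reindex (Equiv.emptySum ι (Fin 2)).symm (Equiv.emptySum ι (Fin 2)).symm
        !![0, 1; 1, 0] := by
    ext (i | i) (j | j) <;> first | exact isEmptyElim i | exact isEmptyElim j | rfl
  rw [hZ]
  refine IsTreelikeWithZeroLeaf.reindex _ ⟨_, .refl _, isTree_hyperbolic, 0, 1, by decide, ?_⟩
  ext j
  fin_cases j <;> rfl

end ZeroLeaf

theorem fromBlocks_reindex_left {α ι' : Type*} [Zero α] (σ : ι ≃ ι') (A : Matrix ι ι α)
    (D : Matrix κ κ α) :
    fromBlocks (reindex σ σ A) 0 0 D =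
      reindex (σ.sumCongr (Equiv.refl κ)) (σ.sumCongr (Equiv.refl κ)) (fromBlocks A 0 0 D) := by
  ext (i | i) (j | j) <;> simp

theorem fromBlocks_fromBlocks_zero {α ν : Type*} [Zero α] (A : Matrix ι ι α)
    (B : Matrix κ κ α) (C : Matrix ν ν α) :
    fromBlocks (fromBlocks A 0 0 B) 0 0 C =
      reindex (Equiv.sumAssoc ι κ ν).symm (Equiv.sumAssoc ι κ ν).symm
        (fromBlocks A 0 0 (fromBlocks B 0 0 C)) := by
  ext ((i | i) | i) ((j | j) | j) <;> simp

end Matrix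

theorem isTreelikeWithZeroLeaf_blockSum_hyperbolic
    (l : List ((n : ℕ) × Matrix (Fin n) (Fin n) ℤ)) (hl : ∀ p ∈ l, IsTreelike p.2) :
    (fromBlocks (blockSum l) 0 0 !![(0 : ℤ), 1; 1, 0]).IsTreelikeWithZeroLeaf := by
  induction l with
  | nil => exact isTreelikeWithZeroLeaf_fromBlocks_hyperbolic (ι := Fin 0) _
  | cons p t ih =>
    obtain ⟨n, A⟩ := p
    obtain ⟨B, hB, hAB⟩ := hl ⟨n, A⟩ List.mem_cons_self
    have ht := ih fun q hq => hl q (List.mem_cons_of_mem _ hq)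
    rw [blockSum, fromBlocks_reindex_left, fromBlocks_reindex_left, fromBlocks_fromBlocks_zero]
    exact (((ht.fromBlocks hB (glzCongruent_iff_glzCongr.mp hAB)).reindex _).reindex _).reindex _

theorem stmt_11_general (l : List ((n : ℕ) × Matrix (Fin n) (Fin n) ℤ))
    (hA : ∀ p ∈ l, IsTreelike p.2) :
    IsTreelike
      (Matrix.reindex finSumFinEquiv finSumFinEquiv
        (Matrix.fromBlocks (blockSum l) 0 0 !![(0 : ℤ), 1; 1, 0])) := by
  obtain ⟨T, hMT, hT, -⟩ := isTreelikeWithZeroLeaf_blockSum_hyperbolic l hA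
  exact ⟨reindex finSumFinEquiv finSumFinEquiv T, hT.reindex _,
    glzCongruent_iff_glzCongr.mpr (hMT.reindex _)⟩

/-- Lemma 3.6: for treelike symmetric integer matrices `A₁, …, A_m` (`m ≥ 1`), the
block-diagonal sum `A₁ ⊕ ⋯ ⊕ A_m ⊕ H` is treelike, where `H = !![0,1;1,0]` is the matrix of
the standard hyperbolic form. -/
theorem stmt_11 (l : List ((n : ℕ) × Matrix (Fin n) (Fin n) ℤ)) (hl : l ≠ [])
    (hA : ∀ p ∈ l, IsTreelike p.2) :
    IsTreelike
      (Matrix.reindex finSumFinEquiv finSumFinEquiv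
        (Matrix.fromBlocks (blockSum l) 0 0 !![(0 : ℤ), 1; 1, 0])) :=
  stmt_11_general l hA
end

section
/- Let k ≥ 2 be an integer and let A be an n×n symmetric integer matrix with det A ≠ 0, all of whose entries are divisible by k. Suppose A is GL(ℤ)-congruent to a symmetric integer matrix B all of whose off-diagonal entries lie in {0,1} (i.e. B = PᵀAP for some integer matrix P with det P = ±1). Then B is a diagonal matrix, say with diagonal entries b₁, …, bₙ, and consequently the quotient group ℤⁿ/A·ℤⁿ is isomorphic to the direct sum of the cyclic groups ℤ/|bᵢ| via an isomorphism carrying the pairing which sends the classes of x, y ∈ ℤⁿ to xᵀA⁻¹y mod ℤ ∈ ℚ/ℤ to the orthogonal sum of the cyclic linking pairings (u,v) ↦ u·v/bᵢ mod ℤ on ℤ/|bᵢ|. -/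
open Matrix

/-!
Congruence preserves divisibility of all entries by `k`, so the off-diagonal entries of `B`,
lying in `{0, 1}` and divisible by `k ≥ 2`, vanish. Then `x ↦ Pᵀx` identifies the cokernel of `A`
with that of the diagonal matrix `B`, which is `∏ ℤ/|bᵢ|`, and turns `xᵀA⁻¹y` into
`(Pᵀx)ᵀB⁻¹(Pᵀy) = ∑ uᵢvᵢ/bᵢ`; modulo `ℤ` each summand only depends on `uᵢ, vᵢ mod bᵢ`.
-/

theorem Int.exists_div_sub_div_eq_of_modEq {K : Type*} [Field K] [CharZero K] {b u v u' v' : ℤ}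
    (hu : u ≡ u' [ZMOD b]) (hv : v ≡ v' [ZMOD b]) :
    ∃ m : ℤ, (u * v : K) / b - (u' * v' : K) / b = m := by
  have hdvd : b ∣ u * v - u' * v' := (hu.mul hv).symm.dvd
  refine ⟨(u * v - u' * v') / b, ?_⟩
  rw [Int.cast_div_charZero hdvd, ← sub_div]
  push_cast
  rfl

theorem ZMod.val_intCast_natAbs_modEq {b : ℤ} (hb : b ≠ 0) (u : ℤ) :
    ((u : ZMod b.natAbs).val : ℤ) ≡ u [ZMOD b] := by
  have : NeZero b.natAbs := ⟨Int.natAbs_ne_zero.mpr hb⟩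
  rw [← Int.modEq_natAbs, ← ZMod.intCast_eq_intCast_iff, Int.cast_natCast, ZMod.natCast_zmod_val]

namespace Matrix

theorem isDiag_of_dvd_of_eq_zero_or_eq_one {ι : Type*} {k : ℕ} (hk : 2 ≤ k) {B : Matrix ι ι ℤ}
    (hdvd : ∀ i j, (k : ℤ) ∣ B i j) (hoff : ∀ i j, i ≠ j → B i j = 0 ∨ B i j = 1) :
    B.IsDiag := fun i j hij =>
  (hoff i j hij).resolve_right fun h1 => by
    have := Int.le_of_dvd one_pos (h1 ▸ hdvd i j)
    omega

variable {ι R S K : Type*} [Fintype ι] [CommRing R] [CommRing S] [Field K]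

theorem dvd_mul_mul_apply {c : R} {A : Matrix ι ι R} (hA : ∀ i j, c ∣ A i j)
    (M N : Matrix ι ι R) (i j : ι) : c ∣ (M * A * N) i j := by
  simp only [mul_apply]
  exact Finset.dvd_sum fun l _ =>
    (Finset.dvd_sum fun m _ => (hA m l).mul_left _).mul_right _

variable [DecidableEq ι]

theorem range_mulVecLin_mul_of_isUnit_det {A P : Matrix ι ι R} (hP : IsUnit P.det) :
    LinearMap.range (A * P).mulVecLin = LinearMap.range A.mulVecLin := by
  have hsurj : Function.Surjective P.mulVecLin := fun v =>
    ⟨P⁻¹ *ᵥ v, by rw [mulVecLin_apply, mulVec_mulVec, mul_nonsing_inv _ hP, one_mulVec]⟩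
  rw [mulVecLin_mul, LinearMap.range_comp_of_range_eq_top _ (LinearMap.range_eq_top.mpr hsurj)]

noncomputable def cokernelEquivOfEqMulMul {A B Q P : Matrix ι ι R} (hQ : IsUnit Q.det)
    (hP : IsUnit P.det) (hB : B = Q * A * P) :
    ((ι → R) ⧸ LinearMap.range A.mulVecLin) ≃ₗ[R] (ι → R) ⧸ LinearMap.range B.mulVecLin :=
  Submodule.Quotient.equiv _ _ (Q.toLinearEquiv' (Q.invertibleOfIsUnitDet hQ)) <| by
    rw [hB, range_mulVecLin_mul_of_isUnit_det hP, mulVecLin_mul, LinearMap.range_comp]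
    rfl

theorem IsDiag.range_mulVecLin {B : Matrix ι ι R} (hB : B.IsDiag) :
    LinearMap.range B.mulVecLin = Submodule.pi Set.univ fun i => Ideal.span {B i i} := by
  ext x
  obtain ⟨d, rfl⟩ : ∃ d, B = diagonal d := ⟨_, hB.diagonal_diag.symm⟩
  simp only [LinearMap.mem_range, mulVecLin_apply, mulVec_diagonal, Submodule.mem_pi,
    Set.mem_univ, true_implies, Ideal.mem_span_singleton', diagonal_apply_eq, funext_iff]
  constructor
  · rintro ⟨y, hy⟩ i
    exact ⟨y i, by rw [← hy, mul_comm]⟩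
  · intro h
    choose y hy using h
    exact ⟨y, fun i => by rw [← hy, mul_comm]⟩

noncomputable def IsDiag.cokernelEquivPiZMod {B : Matrix ι ι ℤ} (hB : B.IsDiag) :
    ((ι → ℤ) ⧸ LinearMap.range B.mulVecLin) ≃+ ∀ i, ZMod (B i i).natAbs :=
  ((Submodule.quotEquivOfEq _ _ hB.range_mulVecLin).trans
    (Submodule.quotientPi _)).toAddEquiv.trans
    (AddEquiv.piCongrRight fun i => (Int.quotientSpanEquivZMod (B i i)).toAddEquiv)

theorem dotProduct_inv_mulVec_eq_of_eq_transpose_mul_mul {A B P : Matrix ι ι R}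
    (hP : IsUnit P.det) (hB : B = Pᵀ * A * P) (x y : ι → R) :
    x ⬝ᵥ A⁻¹ *ᵥ y = (Pᵀ *ᵥ x) ⬝ᵥ B⁻¹ *ᵥ (Pᵀ *ᵥ y) := by
  have hPt : IsUnit Pᵀ.det := by rwa [det_transpose]
  have hA : A⁻¹ = P * B⁻¹ * Pᵀ := by
    rw [hB, mul_inv_rev, mul_inv_rev, Matrix.mul_assoc, Matrix.mul_assoc,
      mul_nonsing_inv_cancel_left _ _ hP, nonsing_inv_mul_cancel_right _ _ hPt]
  rw [hA, ← mulVec_mulVec, ← mulVec_mulVec, dotProduct_mulVec, ← mulVec_transpose]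

theorem map_dotProduct_map_inv_mulVec_of_eq_transpose_mul_mul (f : R →+* S)
    {A B P : Matrix ι ι R} (hP : IsUnit P.det) (hB : B = Pᵀ * A * P) (x y : ι → R) :
    (f ∘ x) ⬝ᵥ (A.map f)⁻¹ *ᵥ (f ∘ y) = (f ∘ (Pᵀ *ᵥ x)) ⬝ᵥ (B.map f)⁻¹ *ᵥ (f ∘ (Pᵀ *ᵥ y)) := by
  have hPf : IsUnit (P.map f).det := by
    simpa only [RingHom.map_det, RingHom.mapMatrix_apply] using hP.map f
  have hBf : B.map f = (P.map f)ᵀ * A.map f * P.map f := by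
    rw [hB, Matrix.map_mul, Matrix.map_mul, transpose_map]
  have hmap : ∀ u : ι → R, f ∘ (Pᵀ *ᵥ u) = (P.map f)ᵀ *ᵥ (f ∘ u) := fun u =>
    funext fun i => by rw [← transpose_map]; exact RingHom.map_mulVec f Pᵀ u i
  rw [dotProduct_inv_mulVec_eq_of_eq_transpose_mul_mul hPf hBf, hmap, hmap]

theorem IsDiag.apply_ne_zero_of_det_ne_zero [IsDomain R] {B : Matrix ι ι R} (hB : B.IsDiag)
    (hdet : B.det ≠ 0) (i : ι) : B i i ≠ 0 := by
  rw [← hB.diagonal_diag, det_diagonal, Finset.prod_ne_zero_iff] at hdet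
  exact hdet i (Finset.mem_univ i)

theorem IsDiag.dotProduct_inv_mulVec {B : Matrix ι ι K} (hB : B.IsDiag) (hdet : B.det ≠ 0)
    (u v : ι → K) : u ⬝ᵥ B⁻¹ *ᵥ v = ∑ i, u i * v i / B i i := by
  have hinv : B⁻¹ = diagonal fun i => (B i i)⁻¹ :=
    inv_eq_left_inv <| by
      conv_lhs => enter [2]; rw [← hB.diagonal_diag]
      rw [diagonal_mul_diagonal, ← diagonal_one]
      exact congrArg diagonal
        (funext fun i => inv_mul_cancel₀ (hB.apply_ne_zero_of_det_ne_zero hdet i))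
  simp only [hinv, mulVec_diagonal, dotProduct, div_eq_mul_inv, mul_assoc, mul_comm (v _)]

end Matrix

theorem stmt_12_general (k : ℕ) (hk : 2 ≤ k) (n : ℕ)
    (A : Matrix (Fin n) (Fin n) ℤ) (hAdet : A.det ≠ 0)
    (hdiv : ∀ i j, (k : ℤ) ∣ A i j)
    (B P : Matrix (Fin n) (Fin n) ℤ)
    (hP : P.det = 1 ∨ P.det = -1)
    (hBoff : ∀ i j, i ≠ j → B i j = 0 ∨ B i j = 1)
    (hBA : B = Pᵀ * A * P) :
    (∀ i j, i ≠ j → B i j = 0) ∧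
    ∃ φ : ((Fin n → ℤ) ⧸ LinearMap.range A.mulVecLin) ≃+ (∀ i, ZMod (B i i).natAbs),
      ∀ x y : Fin n → ℤ, ∃ m : ℤ,
        dotProduct (fun i => (x i : ℚ))
            (((A.map (Int.cast : ℤ → ℚ))⁻¹).mulVec fun i => (y i : ℚ)) -
          ∑ i, ((φ (Submodule.Quotient.mk x) i).val : ℚ) *
              ((φ (Submodule.Quotient.mk y) i).val : ℚ) / (B i i : ℚ) = (m : ℚ) := by
  have hBdiag : B.IsDiag :=
    isDiag_of_dvd_of_eq_zero_or_eq_one hk (hBA ▸ dvd_mul_mul_apply hdiv Pᵀ P) hBoff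
  have hPunit : IsUnit P.det := Int.isUnit_iff.mpr hP
  have hBdet : B.det ≠ 0 := by
    rw [hBA, det_mul, det_mul, det_transpose]
    exact mul_ne_zero (mul_ne_zero hPunit.ne_zero hAdet) hPunit.ne_zero
  let φ := (cokernelEquivOfEqMulMul (by rwa [det_transpose]) hPunit hBA).toAddEquiv.trans
    hBdiag.cokernelEquivPiZMod
  have hφ : ∀ u i, φ (Submodule.Quotient.mk u) i = ((Pᵀ *ᵥ u) i : ZMod (B i i).natAbs) :=
    fun _ _ => rfl
  refine ⟨hBdiag, φ, fun x y => ?_⟩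
  have hpair :=
    map_dotProduct_map_inv_mulVec_of_eq_transpose_mul_mul (Int.castRingHom ℚ) hPunit hBA x y
  simp only [Int.coe_castRingHom, Function.comp_def] at hpair
  rw [hpair, (hBdiag.map Int.cast_zero).dotProduct_inv_mulVec
    (by rw [← Int.cast_det]; exact_mod_cast hBdet)]
  simp only [hφ, map_apply]
  choose m hm using fun i => Int.exists_div_sub_div_eq_of_modEq (K := ℚ)
    (ZMod.val_intCast_natAbs_modEq (hBdiag.apply_ne_zero_of_det_ne_zero hBdet i) _).symm
    (ZMod.val_intCast_natAbs_modEq (hBdiag.apply_ne_zero_of_det_ne_zero hBdet i) _).symm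
  refine ⟨∑ i, m i, ?_⟩
  rw [← Finset.sum_sub_distrib, Int.cast_sum]
  exact Finset.sum_congr rfl fun i _ => by exact_mod_cast hm i

/-- Lemma 5.2: let `A` be a nondegenerate symmetric integer matrix all of whose entries are
divisible by `k ≥ 2`, and suppose `A` is `GL(ℤ)`-congruent to a symmetric matrix `B` with
off-diagonal entries in `{0,1}`.  Then `B` is diagonal, and the cokernel `ℤⁿ/A·ℤⁿ` with the
boundary linking pairing `(x,y) ↦ xᵀA⁻¹y mod ℤ` is isomorphic to the orthogonal sum of the
cyclic linking pairings `(u,v) ↦ u·v/bᵢ mod ℤ` on `ℤ/|bᵢ|`, where `bᵢ = B i i`. -/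
theorem stmt_12 (k : ℕ) (hk : 2 ≤ k) (n : ℕ)
    (A : Matrix (Fin n) (Fin n) ℤ) (hAsymm : A.IsSymm) (hAdet : A.det ≠ 0)
    (hdiv : ∀ i j, (k : ℤ) ∣ A i j)
    (B P : Matrix (Fin n) (Fin n) ℤ)
    (hP : P.det = 1 ∨ P.det = -1)
    (hBsymm : B.IsSymm)
    (hBoff : ∀ i j, i ≠ j → B i j = 0 ∨ B i j = 1)
    (hBA : B = Pᵀ * A * P) :
    (∀ i j, i ≠ j → B i j = 0) ∧
    ∃ φ : ((Fin n → ℤ) ⧸ LinearMap.range A.mulVecLin) ≃+ (∀ i, ZMod (B i i).natAbs),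
      ∀ x y : Fin n → ℤ, ∃ m : ℤ,
        dotProduct (fun i => (x i : ℚ))
            (((A.map (Int.cast : ℤ → ℚ))⁻¹).mulVec fun i => (y i : ℚ)) -
          ∑ i, ((φ (Submodule.Quotient.mk x) i).val : ℚ) *
              ((φ (Submodule.Quotient.mk y) i).val : ℚ) / (B i i : ℚ) = (m : ℚ) :=
  stmt_12_general k hk n A hAdet hdiv B P hP hBoff hBA
end

section
/- For every s ≥ 1 and all positive integers j₁, …, j_s, the 2s×2s block-diagonal symmetric integer matrix whose i-th 2×2 block has rows (0, 2^{jᵢ}) and (2^{jᵢ}, 0) is not GL(ℤ)-congruent to any symmetric integer matrix all of whose off-diagonal entries lie in {0,1}; in particular it is not treelike. -/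
open Matrix

/-! The form `A = ⊕ H₊(2^{jᵢ})` splits as `A = N + Nᵀ` with every entry of `N` divisible by
`c = 2^m`, `m = min jᵢ`. A congruent matrix `Pᵀ A P = M + Mᵀ` (with `M = Pᵀ N P`) then has
diagonal entries `2 Mᵢᵢ ∈ 2c ℤ` and off-diagonal entries in `c ℤ`; since `c` is even, an
off-diagonal entry in `{0, 1}` must vanish. So `Pᵀ A P`, and hence `A`, has all entries in
`2c ℤ`, which the entry `2^m` of `A` contradicts. -/

namespace Matrix

variable {l m n o R : Type*} [CommRing R]

theorem dvd_mul_mul_apply_s13 [Fintype m] [Fintype n] {c : R} {B : Matrix m n R}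
    (hB : ∀ i k, c ∣ B i k) (X : Matrix l m R) (Y : Matrix n o R) (i : l) (k : o) :
    c ∣ (X * B * Y) i k := by
  choose B' hB' using hB
  have : B = c • of B' := by ext i k; exact hB' i k
  rw [this, Matrix.mul_smul, Matrix.smul_mul, smul_apply, smul_eq_mul]
  exact dvd_mul_right _ _

theorem dvd_blockDiagonal_apply [DecidableEq o] {c : R} {d : o → Matrix m n R}
    (hd : ∀ k i i', c ∣ d k i i') (x : m × o) (y : n × o) : c ∣ blockDiagonal d x y := by
  rw [blockDiagonal_apply]
  split_ifs
  · exact hd _ _ _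
  · exact dvd_zero c

theorem two_mul_dvd_of_eq_add_transpose_of_congr_offDiag_zero_or_one [Fintype n]
    [DecidableEq n] {c : R} (hc : ¬ IsUnit c) {N : Matrix n n R} (hN : ∀ i k, c ∣ N i k)
    {P B : Matrix n n R} (hP : IsUnit P.det) (hPB : B = Pᵀ * (N + Nᵀ) * P)
    (hB : ∀ i k, i ≠ k → B i k = 0 ∨ B i k = 1) (i k : n) : 2 * c ∣ (N + Nᵀ) i k := by
  set M := Pᵀ * N * P
  have hBM : B = M + Mᵀ := by
    simp only [hPB, M, mul_add, add_mul, transpose_mul, transpose_transpose, Matrix.mul_assoc]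
  have hM : ∀ i k, c ∣ M i k := dvd_mul_mul_apply_s13 hN Pᵀ P
  have hB2c : ∀ i k, 2 * c ∣ B i k := by
    intro i k
    rcases eq_or_ne i k with rfl | hik
    · rw [hBM, add_apply, transpose_apply, ← two_mul]
      exact mul_dvd_mul_left 2 (hM i i)
    · have hcB : c ∣ B i k := by
        rw [hBM, add_apply, transpose_apply]
        exact dvd_add (hM i k) (hM k i)
      rcases hB i k hik with h0 | h1
      · rw [h0]; exact dvd_zero _
      · exact absurd (isUnit_of_dvd_one (h1 ▸ hcB)) hc
  have hBP : N + Nᵀ = (P⁻¹)ᵀ * B * P⁻¹ := by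
    rw [hPB, ← Matrix.mul_assoc, ← Matrix.mul_assoc, ← transpose_mul, mul_nonsing_inv P hP,
      transpose_one, Matrix.one_mul, Matrix.mul_assoc, mul_nonsing_inv P hP, Matrix.mul_one]
  rw [hBP]
  exact dvd_mul_mul_apply_s13 hB2c _ _ i k

theorem blockDiagonal_hyperbolic_eq_add_transpose [DecidableEq o] (a : o → R) :
    blockDiagonal (fun i => !![0, a i; a i, 0]) =
      blockDiagonal (fun i => !![0, a i; 0, 0]) + (blockDiagonal fun i => !![0, a i; 0, 0])ᵀ := by
  rw [blockDiagonal_transpose, ← blockDiagonal_add]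
  congr 1
  funext i
  ext p q
  fin_cases p <;> fin_cases q <;> simp

end Matrix

theorem GLZCongruent.two_mul_dvd_of_eq_add_transpose {n : ℕ} {c : ℤ} (hc : ¬ IsUnit c)
    {N B : Matrix (Fin n) (Fin n) ℤ} (hN : ∀ i k, c ∣ N i k) (hAB : GLZCongruent (N + Nᵀ) B)
    (hB : ∀ i k, i ≠ k → B i k = 0 ∨ B i k = 1) (i k : Fin n) :
    2 * c ∣ (N + Nᵀ) i k := by
  obtain ⟨P, hdet, hPB⟩ := hAB
  exact two_mul_dvd_of_eq_add_transpose_of_congr_offDiag_zero_or_one hc hN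
    (Int.isUnit_iff.mpr hdet) hPB hB i k

/-- Lemma 5.3 (the `H₊`-part): for `s ≥ 1` and positive integers `j₁, …, j_s`, the
block-diagonal sum of the scaled hyperbolic matrices `H₊(2^{jᵢ}) = !![0, 2^{jᵢ}; 2^{jᵢ}, 0]`
is not `GL(ℤ)`-congruent to any symmetric integer matrix with off-diagonal entries in `{0,1}`;
in particular it is not treelike. -/
theorem stmt_13 (s : ℕ) (hs : 1 ≤ s) (j : Fin s → ℕ) (hj : ∀ i, 1 ≤ j i) :
    (¬ ∃ B : Matrix (Fin (2 * s)) (Fin (2 * s)) ℤ,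
        B.IsSymm ∧ (∀ i k, i ≠ k → B i k = 0 ∨ B i k = 1) ∧
        GLZCongruent
          (Matrix.reindex finProdFinEquiv finProdFinEquiv
            (Matrix.blockDiagonal fun i : Fin s => !![(0 : ℤ), 2 ^ j i; 2 ^ j i, 0])) B) ∧
    ¬ IsTreelike
        (Matrix.reindex finProdFinEquiv finProdFinEquiv
          (Matrix.blockDiagonal fun i : Fin s => !![(0 : ℤ), 2 ^ j i; 2 ^ j i, 0])) := by
  have : Nonempty (Fin s) := ⟨⟨0, hs⟩⟩
  obtain ⟨i₀, hi₀⟩ := Finite.exists_min j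
  set N := reindex finProdFinEquiv finProdFinEquiv
    (blockDiagonal fun i : Fin s => !![(0 : ℤ), 2 ^ j i; 0, 0])
  have hA : reindex finProdFinEquiv finProdFinEquiv
      (blockDiagonal fun i : Fin s => !![(0 : ℤ), 2 ^ j i; 2 ^ j i, 0]) = N + Nᵀ := by
    rw [blockDiagonal_hyperbolic_eq_add_transpose]
    rfl
  have hN : ∀ p q, (2 : ℤ) ^ j i₀ ∣ N p q := fun p q => by
    simp only [N, reindex_apply, submatrix_apply]
    refine dvd_blockDiagonal_apply (fun i a b => ?_) _ _
    fin_cases a <;> fin_cases b <;> simp [pow_dvd_pow (2 : ℤ) (hi₀ i)]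
  have hc : ¬ IsUnit ((2 : ℤ) ^ j i₀) := by
    rw [isUnit_pow_iff (by have := hj i₀; omega)]
    exact Int.prime_two.not_isUnit
  have hentry :
      ¬ 2 * 2 ^ j i₀ ∣ (N + Nᵀ) (finProdFinEquiv (0, i₀)) (finProdFinEquiv (1, i₀)) := by
    rw [← hA, ← pow_succ']
    simp [pow_dvd_pow_iff two_ne_zero Int.prime_two.not_isUnit]
  have hnot : ¬ ∃ B : Matrix (Fin (2 * s)) (Fin (2 * s)) ℤ,
      B.IsSymm ∧ (∀ i k, i ≠ k → B i k = 0 ∨ B i k = 1) ∧ GLZCongruent (N + Nᵀ) B :=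
    fun ⟨B, _, hB, hAB⟩ => hentry (hAB.two_mul_dvd_of_eq_add_transpose hc hN hB _ _)
  rw [hA]
  exact ⟨hnot, fun ⟨B, ⟨hsymm, h01, _⟩, hAB⟩ => hnot ⟨B, hsymm, h01, hAB⟩⟩
end

section
/- Call an n×n integer matrix A a skew tree matrix if Aᵀ = −A, all entries of A lie in {−1, 0, 1}, and the simple graph on {1,…,n} in which distinct i and j are adjacent exactly when A(i,j) ≠ 0 is a tree (connected and acyclic). Then every skew tree matrix A is GL(ℤ)-congruent (i.e. of the form PᵀBP with det P = ±1) to a block-diagonal matrix consisting of s copies of the 2×2 matrix J with rows (0,1), (−1,0) followed by a t×t zero block, for some s, t ≥ 0 with 2s + t = n. -/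
open Matrix

/-! Induction on the number of vertices; a matrix whose graph has no edge is zero. Otherwise the
forest has a leaf `v` with unique neighbour `w`, and `ε = A v w = ±1`. The unimodular change of
basis `e u ↦ e u + ε A w u • e v` (for `u ≠ v`) clears the row and column of `w` outside the
entry `(v, w)` and leaves the other entries alone, because `e v` pairs nontrivially only with
`e w`. Hence `A` is the orthogonal sum of the plane spanned by `e v, e w`, on which it is
`±J ≅ J`, and of its restriction to the remaining vertices, which is again a skew forest
matrix. -/

-- The start of a longest path is a leaf.
theorem SimpleGraph.IsAcyclic.exists_adj_forall_adj_eq {V : Type*} [Finite V]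
    {G : SimpleGraph V} (hG : G.IsAcyclic) {a b : V} (hab : G.Adj a b) :
    ∃ v w, G.Adj v w ∧ ∀ u, G.Adj v u → u = w := by
  have : Nonempty V := ⟨a⟩
  obtain ⟨u, v, p, hp, hmax⟩ := Walk.exists_isPath_forall_isPath_length_le_length G
  have hnil : ¬p.Nil := fun h => by
    simpa [Walk.length_eq_zero_iff.mpr h] using hmax _ _ _ (Walk.IsPath.of_adj hab)
  refine ⟨u, p.snd, p.adj_snd hnil, fun w hadj => hG.eq_snd_of_adj_start hp hadj ?_⟩
  by_contra hw
  simpa using hmax _ _ _ (hp.cons hw (h := hadj.symm))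

namespace SkewTree

variable {R : Type*} {k l m : Type*}

section Congruence

variable [CommSemiring R] [Fintype k] [Fintype l] [Fintype m]
  [DecidableEq k] [DecidableEq l] [DecidableEq m]

def Congruent (A : Matrix k k R) (B : Matrix l l R) : Prop :=
  ∃ (P : Matrix l k R) (Q : Matrix k l R), P * Q = 1 ∧ Q * P = 1 ∧ Pᵀ * B * P = A

namespace Congruent

theorem trans {A : Matrix k k R} {B : Matrix l l R} {C : Matrix m m R}
    (hAB : Congruent A B) (hBC : Congruent B C) : Congruent A C := by
  obtain ⟨P₁, Q₁, hPQ₁, hQP₁, rfl⟩ := hAB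
  obtain ⟨P₂, Q₂, hPQ₂, hQP₂, rfl⟩ := hBC
  refine ⟨P₂ * P₁, Q₁ * Q₂, ?_, ?_, ?_⟩
  · rw [Matrix.mul_assoc, ← Matrix.mul_assoc P₁, hPQ₁, Matrix.one_mul, hPQ₂]
  · rw [Matrix.mul_assoc, ← Matrix.mul_assoc Q₂, hQP₂, Matrix.one_mul, hQP₁]
  · simp only [transpose_mul, Matrix.mul_assoc]

theorem symm {A : Matrix k k R} {B : Matrix l l R} (h : Congruent A B) : Congruent B A := by
  obtain ⟨P, Q, hPQ, hQP, rfl⟩ := h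
  refine ⟨Q, P, hQP, hPQ, ?_⟩
  rw [← Matrix.mul_assoc, ← Matrix.mul_assoc, ← transpose_mul, Matrix.mul_assoc,
    Matrix.mul_assoc, hPQ, transpose_one, Matrix.one_mul, Matrix.mul_one]

theorem submatrix_equiv (B : Matrix l l R) (e : k ≃ l) : Congruent (B.submatrix e e) B :=
  ⟨(1 : Matrix l l R).submatrix (Equiv.refl l) e, (1 : Matrix l l R).submatrix e (Equiv.refl l),
    by rw [submatrix_mul_equiv (e₂ := e)]; simp,
    by rw [submatrix_mul_equiv (e₂ := Equiv.refl l)]; simp [submatrix_one_equiv],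
    by rw [transpose_submatrix, transpose_one, mul_submatrix_one, one_submatrix_mul]; simp⟩

theorem fromBlocks {k' l' : Type*} [Fintype k'] [Fintype l'] [DecidableEq k'] [DecidableEq l']
    {A : Matrix k k R} {B : Matrix l l R} {A' : Matrix k' k' R} {B' : Matrix l' l' R}
    (h : Congruent A B) (h' : Congruent A' B') :
    Congruent (Matrix.fromBlocks A 0 0 A') (Matrix.fromBlocks B 0 0 B') := by
  obtain ⟨P, Q, hPQ, hQP, rfl⟩ := h
  obtain ⟨P', Q', hPQ', hQP', rfl⟩ := h'
  refine ⟨Matrix.fromBlocks P 0 0 P', Matrix.fromBlocks Q 0 0 Q', ?_, ?_, ?_⟩ <;>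
    simp [fromBlocks_multiply, fromBlocks_transpose, hPQ, hPQ', hQP, hQP', fromBlocks_one]

end Congruent

theorem congruent_zero_zero (h : Fintype.card k = Fintype.card l) :
    Congruent (0 : Matrix k k R) (0 : Matrix l l R) := by
  simpa using Congruent.submatrix_equiv (0 : Matrix l l R) (Fintype.equivOfCardEq h)

end Congruence

section Transvection

variable [CommRing R] [Fintype k] [DecidableEq k]

theorem congruent_one_add_of_mul_self_eq_zero {N : Matrix k k R} (hN : N * N = 0)
    (A : Matrix k k R) : Congruent ((1 + N)ᵀ * A * (1 + N)) A :=
  ⟨1 + N, 1 - N, by noncomm_ring; simp [hN], by noncomm_ring; simp [hN], rfl⟩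

theorem mul_self_vecMulVec_single_eq_zero {v : k} {c : k → R} (hc : c v = 0) :
    vecMulVec (Pi.single v 1) c * vecMulVec (Pi.single v 1) c = 0 := by
  simp [vecMulVec_mul_vecMulVec, hc]

theorem transpose_mul_mul_one_add_vecMulVec_single_apply (A : Matrix k k R) (v : k)
    (c : k → R) (a b : k) :
    ((1 + vecMulVec (Pi.single v 1) c)ᵀ * A * (1 + vecMulVec (Pi.single v 1) c) : Matrix k k R)
      a b = A a b + A a v * c b + c a * A v b + c a * A v v * c b := by
  simp only [transpose_add, transpose_one, transpose_vecMulVec, Matrix.add_mul, Matrix.mul_add,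
    Matrix.one_mul, Matrix.mul_one, Matrix.add_apply, vecMulVec_mul, mul_vecMulVec]
  simp only [single_vecMul, one_smul, vecMulVec_apply, row_apply, mulVec_single,
    MulOpposite.op_one, col_apply, Matrix.add_apply]
  ring

end Transvection

section Splitting

variable [DecidableEq k]

def pairSumCompl {v w : k} (hvw : v ≠ w) : Fin 2 ⊕ {u // u ≠ v ∧ u ≠ w} ≃ k where
  toFun := Sum.elim ![v, w] Subtype.val
  invFun u := if hv : u = v then .inl 0 else if hw : u = w then .inl 1 else .inr ⟨u, hv, hw⟩
  left_inv := by
    rintro (i | ⟨u, hv, hw⟩)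
    · fin_cases i <;> simp [hvw.symm]
    · simp [hv, hw]
  right_inv u := by
    by_cases hv : u = v
    · simp [hv]
    · by_cases hw : u = w
      · subst hw; simp [hvw.symm]
      · simp [hv, hw]

theorem submatrix_pairSumCompl [CommRing R] {B : Matrix k k R} (hskew : Bᵀ = -B) {v w : k}
    (hvw : v ≠ w) (hv : ∀ u, u ≠ w → B v u = 0) (hw : ∀ u, u ≠ v → B w u = 0) :
    B.submatrix (pairSumCompl hvw) (pairSumCompl hvw) =
      fromBlocks !![0, B v w; -B v w, 0] 0 0 (B.submatrix Subtype.val Subtype.val) := by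
  have hB : ∀ a b, B b a = -B a b := fun a b => by simpa using congrFun (congrFun hskew a) b
  ext (i | ⟨a, ha⟩) (j | ⟨b, hb⟩)
  · fin_cases i <;> fin_cases j <;> simp [pairSumCompl, hv, hw, hvw, hvw.symm, hB w v]
  · fin_cases i <;> simp [pairSumCompl, hv, hw, hb.1, hb.2]
  · fin_cases j <;> simp [pairSumCompl, hB v a, hB w a, hv a ha.2, hw a ha.1]
  · rfl

theorem congruent_fromBlocks_of_leaf [CommRing R] [Fintype k] {A : Matrix k k R}
    (hskew : Aᵀ = -A) (hdiag : ∀ i, A i i = 0) {v w : k} (hvw : v ≠ w)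
    (hleaf : ∀ u, u ≠ w → A v u = 0) (hε : A v w * A v w = 1) :
    Congruent A (fromBlocks !![0, A v w; -A v w, 0] 0 0
      (A.submatrix (Subtype.val : {u // u ≠ v ∧ u ≠ w} → k) Subtype.val)) := by
  set c : k → R := fun b => if b = v then 0 else A v w * A w b
  set N := vecMulVec (Pi.single v 1) c
  set B := (1 + N)ᵀ * A * (1 + N)
  have hA : ∀ a b, A b a = -A a b := fun a b => by simpa using congrFun (congrFun hskew a) b
  have hB : ∀ a b, B a b = A a b + A a v * c b + c a * A v b := fun a b => by
    simp only [B, N, transpose_mul_mul_one_add_vecMulVec_single_apply, hdiag]; ring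
  have hBskew : Bᵀ = -B := by simp [B, transpose_mul, hskew, Matrix.mul_assoc]
  have hBv : ∀ u, B v u = A v u := fun u => by simp [hB, hdiag, c]
  have hBw : ∀ u, u ≠ v → B w u = 0 := fun u hu => by
    simp only [hB, hA v w, c, if_neg hu, if_neg hvw.symm, hdiag, mul_zero, zero_mul, add_zero]
    linear_combination (-A w u) * hε
  have hBrest : (B.submatrix Subtype.val Subtype.val :
      Matrix {u // u ≠ v ∧ u ≠ w} {u // u ≠ v ∧ u ≠ w} R) =
        A.submatrix Subtype.val Subtype.val := by
    ext ⟨a, ha⟩ ⟨b, hb⟩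
    simp [hB, hA v a, hleaf a ha.2, hleaf b hb.2]
  have hAB : Congruent A B :=
    (congruent_one_add_of_mul_self_eq_zero (mul_self_vecMulVec_single_eq_zero (by simp [c])) A).symm
  have hsplit := submatrix_pairSumCompl hBskew hvw (fun u hu => (hBv u).trans (hleaf u hu)) hBw
  rw [hBrest, hBv] at hsplit
  exact hsplit ▸ hAB.trans (Congruent.submatrix_equiv B _).symm

end Splitting

section NormalForm

variable [CommRing R]

theorem congruent_skewPlane {ε : R} (hε : ε * ε = 1) :
    Congruent !![0, ε; -ε, 0] !![(0 : R), 1; -1, 0] :=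
  ⟨!![1, 0; 0, ε], !![1, 0; 0, ε], by simp [hε, one_fin_two], by simp [hε, one_fin_two],
    by ext i j; fin_cases i <;> fin_cases j <;> simp [Matrix.mul_apply, Fin.sum_univ_two]⟩

variable (R) in
def skewNormalForm (s t : ℕ) :
    Matrix ((Fin 2 × Fin s) ⊕ Fin t) ((Fin 2 × Fin s) ⊕ Fin t) R :=
  fromBlocks (blockDiagonal fun _ : Fin s => !![0, 1; -1, 0]) 0 0 0

theorem skewNormalForm_zero_left (t : ℕ) : skewNormalForm R 0 t = 0 := by
  ext (⟨_, ⟨_, h⟩⟩ | _) (_ | _) <;> first | exact absurd h (Nat.not_lt_zero _) | rfl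

def finTwoProdSuccEquiv (s : ℕ) : Fin 2 ⊕ (Fin 2 × Fin s) ≃ Fin 2 × Fin (s + 1) where
  toFun := Sum.elim (fun i => (i, 0)) (fun p => (p.1, p.2.succ))
  invFun p := Fin.cases (.inl p.1) (fun j => .inr (p.1, j)) p.2
  left_inv := by rintro (i | ⟨i, j⟩) <;> rfl
  right_inv := by rintro ⟨i, j⟩; cases j using Fin.cases <;> rfl

theorem submatrix_skewNormalForm_succ (s t : ℕ) :
    (skewNormalForm R (s + 1) t).submatrix
        ((Equiv.sumAssoc _ _ _).symm.trans ((finTwoProdSuccEquiv s).sumCongr (Equiv.refl _)))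
        ((Equiv.sumAssoc _ _ _).symm.trans ((finTwoProdSuccEquiv s).sumCongr (Equiv.refl _))) =
      fromBlocks !![0, 1; -1, 0] 0 0 (skewNormalForm R s t) := by
  ext (i | (⟨i, a⟩ | x)) (j | (⟨j, b⟩ | y)) <;>
    simp [skewNormalForm, finTwoProdSuccEquiv, blockDiagonal_apply, Fin.succ_ne_zero,
      (Fin.succ_ne_zero _).symm]

theorem congruent_fromBlocks_skewNormalForm (s t : ℕ) :
    Congruent (fromBlocks !![(0 : R), 1; -1, 0] 0 0 (skewNormalForm R s t))
      (skewNormalForm R (s + 1) t) :=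
  submatrix_skewNormalForm_succ (R := R) s t ▸ Congruent.submatrix_equiv _ _

end NormalForm

def supportGraph [Zero R] (A : Matrix k k R) : SimpleGraph k :=
  SimpleGraph.fromRel fun i j => A i j ≠ 0

theorem supportGraph_submatrix [Zero R] (A : Matrix k k R) (f : l ↪ k) :
    supportGraph (A.submatrix f f) = (supportGraph A).comap f := by
  ext; simp [supportGraph, f.injective.eq_iff]

theorem exists_congruent_skewNormalForm [Fintype k] [DecidableEq k] (A : Matrix k k ℤ)
    (hskew : Aᵀ = -A) (hent : ∀ i j, A i j = -1 ∨ A i j = 0 ∨ A i j = 1)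
    (hacyc : (supportGraph A).IsAcyclic) :
    ∃ s t, 2 * s + t = Fintype.card k ∧ Congruent A (skewNormalForm ℤ s t) := by
  induction hn : Fintype.card k using Nat.strong_induction_on generalizing k with
  | _ n ih =>
  have hA : ∀ i j, A j i = -A i j := fun i j => by simpa using congrFun (congrFun hskew i) j
  have hdiag : ∀ i, A i i = 0 := fun i => by linarith [hA i i]
  by_cases hedge : ∃ v w, (supportGraph A).Adj v w
  · obtain ⟨a, b, hab⟩ := hedge
    obtain ⟨v, w, hvw, hleaf⟩ := hacyc.exists_adj_forall_adj_eq hab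
    have hvw0 : A v w ≠ 0 := hvw.2.elim id fun h : A w v ≠ 0 => by rwa [hA, neg_ne_zero] at h
    have hε : A v w * A v w = 1 := by
      rcases hent v w with h | h | h <;> simp [h] at hvw0 ⊢
    have hleafA : ∀ u, u ≠ w → A v u = 0 := fun u hu => by
      by_contra h
      exact hu (hleaf u ⟨fun h' => h (h' ▸ hdiag v), Or.inl h⟩)
    have hcard : Fintype.card {u // u ≠ v ∧ u ≠ w} + 2 = n := by
      simpa [add_comm] using (Fintype.card_congr (pairSumCompl hvw.ne)).trans hn
    obtain ⟨s, t, hst, hA'⟩ := ih (Fintype.card {u // u ≠ v ∧ u ≠ w}) (by omega)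
      (A.submatrix Subtype.val Subtype.val) (by rw [transpose_submatrix, hskew]; rfl)
      (fun _ _ => hent _ _)
      (by rw [← Function.Embedding.coe_subtype, supportGraph_submatrix]; exact hacyc.of_comap _)
      rfl
    exact ⟨s + 1, t, by omega,
      (congruent_fromBlocks_of_leaf hskew hdiag hvw.ne hleafA hε).trans
        (((congruent_skewPlane hε).fromBlocks hA').trans
          (congruent_fromBlocks_skewNormalForm s t))⟩
  · have hA0 : A = 0 := ext fun i j => by
      by_contra h
      exact hedge ⟨i, j, fun hij => h (hij ▸ hdiag i), Or.inl h⟩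
    refine ⟨0, n, by omega, ?_⟩
    rw [hA0, skewNormalForm_zero_left]
    exact congruent_zero_zero (by simp [hn])

theorem Congruent.exists_det_eq_one_or_neg_one [Fintype k] [DecidableEq k] {A B : Matrix k k ℤ}
    (h : Congruent A B) :
    ∃ P : Matrix k k ℤ, (P.det = 1 ∨ P.det = -1) ∧ Pᵀ * B * P = A := by
  obtain ⟨P, Q, hPQ, -, hPBP⟩ := h
  exact ⟨P, Int.eq_one_or_neg_one_of_mul_eq_one (by rw [← det_mul, hPQ, det_one]), hPBP⟩

end SkewTree

/-- Proposition 6.3: every skew tree matrix `A` (i.e. `Aᵀ = −A`, entries in `{−1,0,1}`, and the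
graph in which distinct `i`, `j` are adjacent exactly when `A i j ≠ 0` is a tree) is
`GL(ℤ)`-congruent to a block-diagonal matrix consisting of `s` copies of `J = !![0,1;-1,0]`
followed by a `t × t` zero block, where `2s + t = n`. -/
theorem stmt_16 (n : ℕ) (A : Matrix (Fin n) (Fin n) ℤ)
    (hskew : Aᵀ = -A)
    (hent : ∀ i j, A i j = -1 ∨ A i j = 0 ∨ A i j = 1)
    (htree : (SimpleGraph.fromRel fun i j => A i j ≠ 0).IsTree) :
    ∃ (s t : ℕ) (h : 2 * s + t = n) (P : Matrix (Fin n) (Fin n) ℤ),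
      (P.det = 1 ∨ P.det = -1) ∧
      Pᵀ *
        (Matrix.reindex
          (((Equiv.sumCongr finProdFinEquiv (Equiv.refl (Fin t))).trans
            finSumFinEquiv).trans (finCongr h))
          (((Equiv.sumCongr finProdFinEquiv (Equiv.refl (Fin t))).trans
            finSumFinEquiv).trans (finCongr h))
          (Matrix.fromBlocks
            (Matrix.blockDiagonal fun _ : Fin s => !![(0 : ℤ), 1; -1, 0]) 0 0
            (0 : Matrix (Fin t) (Fin t) ℤ))) * P = A := by
  obtain ⟨s, t, hst, hA⟩ :=
    SkewTree.exists_congruent_skewNormalForm A hskew hent htree.isAcyclic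
  rw [Fintype.card_fin] at hst
  exact ⟨s, t, hst,
    (hA.trans (SkewTree.Congruent.submatrix_equiv _ _).symm).exists_det_eq_one_or_neg_one⟩
end
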